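/- arXiv:2311.04618 — 3 statements merged into one kernel-verified Lean document; each statement's English description precedes it below -/
import Mathlib

section
/- Let μ be an exponent-type measure on ℝ^d, ‖·‖ a norm on ℝ^d, and X a random vector in [0,∞)^d regularly varying with limit measure μ. For nonempty J ⊆ D and ε > 0 define the thickened cone C^ε_{n,J} = {x ∈ [0,∞)^d \ {0} : ‖x‖ > n, x_j > ε‖x‖ for all j ∈ J, and x_j ≤ ε‖x‖ for all j ∈ D \ J}. Then there exists an at most countable set N ⊂ (0,∞) such that for every ε ∈ (0,∞) \ N the limit L(ε) = lim_{n→∞} n P[X ∈ C^ε_{n,J}] exists, and L(ε) → μ({x ∈ E_J : ‖x‖ > 1}) as ε ↓ 0 with ε ranging over (0,∞) \ N. -/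
open MeasureTheory Filter

/-- The set `E_J = {x ∈ [0,∞)^d \ {0} : x_j > 0 iff j ∈ J}`. -/
def EJ {d : ℕ} (J : Finset (Fin d)) : Set (Fin d → ℝ) :=
  {x | (∀ j, 0 ≤ x j) ∧ x ≠ 0 ∧ ∀ j, (0 < x j ↔ j ∈ J)}

/-- An exponent-type measure on `ℝ^d`. -/
structure IsExponentMeasure {d : ℕ} (μ : Measure (Fin d → ℝ)) : Prop where
  concentrated : μ {x | ¬ ((∀ j, 0 ≤ x j) ∧ x ≠ 0)} = 0
  homog : ∀ c : ℝ, 0 < c → ∀ B : Set (Fin d → ℝ), MeasurableSet B →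
    μ ((c • ·) '' B) = (ENNReal.ofReal c)⁻¹ * μ B
  finite_away : ∀ B : Set (Fin d → ℝ), (0 : Fin d → ℝ) ∉ closure B → μ B < ⊤

/-- `N` is a norm on `ℝ^d`. -/
structure IsNorm {d : ℕ} (N : (Fin d → ℝ) → ℝ) : Prop where
  nonneg : ∀ x, 0 ≤ N x
  eq_zero_iff : ∀ x, N x = 0 ↔ x = 0
  triangle : ∀ x y, N (x + y) ≤ N x + N y
  smul : ∀ (c : ℝ) (x), N (c • x) = |c| * N x

/-- `X` is regularly varying with limit measure `μ`. -/
def RegularlyVarying {d : ℕ} {Ω : Type*} [MeasurableSpace Ω] (P : Measure Ω)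
    (X : Ω → Fin d → ℝ) (μ : Measure (Fin d → ℝ)) : Prop :=
  ∀ B : Set (Fin d → ℝ), MeasurableSet B → (0 : Fin d → ℝ) ∉ closure B →
    μ (frontier B) = 0 →
    Tendsto (fun n : ℕ => (n : ℝ) * (P {ω | (fun j => X ω j / n) ∈ B}).toReal)
      atTop (nhds (μ B).toReal)

/-- The thickened cone `C^ε_{t,J}`. -/
def thickCone {d : ℕ} (N : (Fin d → ℝ) → ℝ) (J : Finset (Fin d)) (ε t : ℝ) :
    Set (Fin d → ℝ) :=
  {x | (∀ j, 0 ≤ x j) ∧ x ≠ 0 ∧ t < N x ∧ (∀ j ∈ J, ε * N x < x j) ∧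
    ∀ j ∉ J, x j ≤ ε * N x}

theorem isnorm_zero {d : ℕ} {N : (Fin d → ℝ) → ℝ} (hN : IsNorm N) : N 0 = 0 :=
  (hN.eq_zero_iff 0).2 rfl

theorem isnorm_sum_le {d : ℕ} {N : (Fin d → ℝ) → ℝ} (hN : IsNorm N) {ι : Type*}
    (s : Finset ι) (f : ι → Fin d → ℝ) : N (∑ i ∈ s, f i) ≤ ∑ i ∈ s, N (f i) := by
  classical
  induction s using Finset.cons_induction with
  | empty => simp [isnorm_zero hN]
  | cons a s ha ih =>
    rw [Finset.sum_cons, Finset.sum_cons]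
    exact (hN.triangle _ _).trans (by linarith)

theorem isnorm_continuous {d : ℕ} {N : (Fin d → ℝ) → ℝ} (hN : IsNorm N) : Continuous N := by
  classical
  set C : ℝ := ∑ j : Fin d, N (Pi.single j 1) with hC
  have hC0 : 0 ≤ C := Finset.sum_nonneg fun j _ => hN.nonneg _
  have hbound : ∀ x, N x ≤ C * ‖x‖ := by
    intro x
    have hx : x = ∑ j : Fin d, (x j) • (Pi.single j (1:ℝ) : Fin d → ℝ) := by
      ext k
      simp [Finset.sum_apply, Pi.single_apply, mul_ite]
    calc N x = N (∑ j : Fin d, (x j) • (Pi.single j (1:ℝ) : Fin d → ℝ)) := by rw [← hx]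
    _ ≤ ∑ j : Fin d, N ((x j) • (Pi.single j (1:ℝ) : Fin d → ℝ)) := isnorm_sum_le hN _ _
    _ ≤ ∑ j : Fin d, ‖x‖ * N (Pi.single j (1:ℝ)) := by
        apply Finset.sum_le_sum
        intro j _
        rw [hN.smul]
        have h1 : |x j| ≤ ‖x‖ := by
          have := norm_le_pi_norm x j
          simpa [Real.norm_eq_abs] using this
        exact mul_le_mul_of_nonneg_right h1 (hN.nonneg _)
    _ = C * ‖x‖ := by rw [← Finset.mul_sum, mul_comm]
  have hlip : ∀ x y, |N x - N y| ≤ C * ‖x - y‖ := by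
    intro x y
    have h1 : N x ≤ N (x - y) + N y := by
      have := hN.triangle (x - y) y; simpa using this
    have h2 : N y ≤ N (x - y) + N x := by
      have h3 : N (y - x) = N (x - y) := by
        have h4 : y - x = (-1 : ℝ) • (x - y) := by
          rw [neg_one_smul]; abel
        rw [h4, hN.smul]; norm_num
      have := hN.triangle (y - x) x; rw [h3] at this; simpa using this
    have hb := hbound (x - y)
    rw [abs_sub_le_iff]; constructor <;> linarith
  have : LipschitzWith ⟨C, hC0⟩ N := by
    apply LipschitzWith.of_dist_le_mul
    intro x y
    rw [Real.dist_eq, dist_eq_norm]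
    exact hlip x y
  exact this.continuous

theorem isnorm_pos {d : ℕ} {N : (Fin d → ℝ) → ℝ} (hN : IsNorm N) {x : Fin d → ℝ}
    (hx : x ≠ 0) : 0 < N x :=
  lt_of_le_of_ne (hN.nonneg x) fun h => hx ((hN.eq_zero_iff x).1 h.symm)

theorem measure_norm_eq_one_zero {d : ℕ} {μ : Measure (Fin d → ℝ)} (hμ : IsExponentMeasure μ)
    {N : (Fin d → ℝ) → ℝ} (hN : IsNorm N) : μ {x | N x = 1} = 0 := by
  have hNc := isnorm_continuous hN
  have hNm : Measurable N := hNc.measurable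
  have hfin : μ {x | 1 ≤ N x} ≠ ⊤ := by
    refine (hμ.finite_away _ ?_).ne
    rw [(isClosed_le continuous_const hNc).closure_eq]
    simp [isnorm_zero hN]
  have hmble : ∀ t : Set.Ioo (1:ℝ) 2, MeasurableSet {x : Fin d → ℝ | N x = (t:ℝ)} :=
    fun t => hNm (measurableSet_singleton _)
  have hdisj : Pairwise (Function.onFun Disjoint fun t : Set.Ioo (1:ℝ) 2 => {x : Fin d → ℝ | N x = (t:ℝ)}) := by
    intro s t hst
    refine Set.disjoint_left.2 fun x hx1 hx2 => hst ?_
    exact Subtype.ext ((hx1 : N x = (s:ℝ)).symm.trans hx2)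
  have hUn : μ (⋃ t : Set.Ioo (1:ℝ) 2, {x : Fin d → ℝ | N x = (t:ℝ)}) ≠ ⊤ := by
    refine ne_top_of_le_ne_top hfin (measure_mono ?_)
    intro x hx
    simp only [Set.mem_iUnion, Set.mem_setOf_eq] at hx ⊢
    obtain ⟨t, ht⟩ := hx
    rw [ht]; exact t.2.1.le
  have hcnt := MeasureTheory.Measure.countable_meas_pos_of_disjoint_of_meas_iUnion_ne_top μ
    hmble hdisj hUn
  have hex : ∃ t : Set.Ioo (1:ℝ) 2, μ {x : Fin d → ℝ | N x = (t:ℝ)} = 0 := by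
    by_contra h
    push_neg at h
    have huniv : {t : Set.Ioo (1:ℝ) 2 | 0 < μ {x : Fin d → ℝ | N x = (t:ℝ)}} = Set.univ := by
      ext t
      simpa using pos_iff_ne_zero.2 (h t)
    rw [huniv] at hcnt
    have h1 : (Set.Ioo (1:ℝ) 2).Countable :=
      Set.countable_coe_iff.mp (Set.countable_univ_iff.mp hcnt)
    have h2 := h1.le_aleph0
    rw [Cardinal.mk_Ioo_real (by norm_num : (1:ℝ) < 2)] at h2
    exact Cardinal.aleph0_lt_continuum.not_ge h2
  obtain ⟨t, ht0⟩ := hex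
  have htpos : (0:ℝ) < t := lt_trans one_pos t.2.1
  have himg : (fun x => (t:ℝ) • x) '' {x : Fin d → ℝ | N x = 1} = {x : Fin d → ℝ | N x = (t:ℝ)} := by
    ext y
    constructor
    · rintro ⟨x, hx, rfl⟩
      simp only [Set.mem_setOf_eq] at hx ⊢
      rw [hN.smul, hx, abs_of_pos htpos, mul_one]
    · intro hy
      refine ⟨(t:ℝ)⁻¹ • y, ?_, smul_inv_smul₀ (ne_of_gt htpos) y⟩
      simp only [Set.mem_setOf_eq] at hy ⊢
      rw [hN.smul, hy, abs_of_pos (inv_pos.2 htpos), inv_mul_cancel₀ (ne_of_gt htpos)]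
  have hhom := hμ.homog (t:ℝ) htpos _ (hNm (measurableSet_singleton 1))
  have hpre : (N ⁻¹' {1}) = {x : Fin d → ℝ | N x = 1} := rfl
  rw [hpre] at hhom
  rw [himg, ht0] at hhom
  rcases mul_eq_zero.1 hhom.symm with h | h
  · exact absurd (ENNReal.inv_eq_zero.1 h) ENNReal.ofReal_ne_top
  · exact h

def coneB {d : ℕ} (N : (Fin d → ℝ) → ℝ) (J : Finset (Fin d)) (ε : ℝ) : Set (Fin d → ℝ) :=
  {x | 1 < N x ∧ (∀ j ∈ J, ε * N x < x j) ∧ ∀ j ∉ J, x j ≤ ε * N x}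

theorem coneB_measurable {d : ℕ} {N : (Fin d → ℝ) → ℝ} (hNm : Measurable N)
    (J : Finset (Fin d)) (ε : ℝ) : MeasurableSet (coneB N J ε) := by
  have h1 : MeasurableSet {x : Fin d → ℝ | 1 < N x} := measurableSet_lt measurable_const hNm
  have h2 : ∀ j : Fin d, MeasurableSet {x : Fin d → ℝ | ε * N x < x j} :=
    fun j => measurableSet_lt (measurable_const.mul hNm) (measurable_pi_apply j)
  have h3 : ∀ j : Fin d, MeasurableSet {x : Fin d → ℝ | x j ≤ ε * N x} :=
    fun j => measurableSet_le (measurable_pi_apply j) (measurable_const.mul hNm)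
  have heq : coneB N J ε = {x : Fin d → ℝ | 1 < N x} ∩
      ((⋂ j ∈ J, {x : Fin d → ℝ | ε * N x < x j}) ∩
        ⋂ j ∈ {j : Fin d | j ∉ J}, {x : Fin d → ℝ | x j ≤ ε * N x}) := by
    ext x
    simp only [coneB, Set.mem_setOf_eq, Set.mem_inter_iff, Set.mem_iInter]
  rw [heq]
  exact h1.inter ((MeasurableSet.biInter (Set.to_countable _) fun j _ => h2 j).inter
    (MeasurableSet.biInter (Set.to_countable _) fun j _ => h3 j))

theorem frontier_coneB_subset {d : ℕ} {N : (Fin d → ℝ) → ℝ} (hNc : Continuous N)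
    (J : Finset (Fin d)) (ε : ℝ) :
    frontier (coneB N J ε) ⊆ {x | N x = 1} ∪ ⋃ j, {x | 1 ≤ N x ∧ x j = ε * N x} := by
  classical
  intro x hx
  rw [← closure_diff_interior] at hx
  obtain ⟨hxc, hxi⟩ := hx
  have hge : 1 ≤ N x := by
    have h : closure (coneB N J ε) ⊆ {x | 1 ≤ N x} :=
      closure_minimal (fun y hy => le_of_lt hy.1) (isClosed_le continuous_const hNc)
    exact h hxc
  have hJle : ∀ j ∈ J, ε * N x ≤ x j := by
    intro j hj
    have h : closure (coneB N J ε) ⊆ {x | ε * N x ≤ x j} :=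
      closure_minimal (fun y hy => le_of_lt (hy.2.1 j hj))
        (isClosed_le (continuous_const.mul hNc) (continuous_apply j))
    exact h hxc
  have hJge : ∀ j ∉ J, x j ≤ ε * N x := by
    intro j hj
    have h : closure (coneB N J ε) ⊆ {x | x j ≤ ε * N x} :=
      closure_minimal (fun y hy => hy.2.2 j hj)
        (isClosed_le (continuous_apply j) (continuous_const.mul hNc))
    exact h hxc
  by_cases h1 : N x = 1
  · exact Or.inl h1
  by_cases h2 : ∃ j, x j = ε * N x
  · obtain ⟨j, hj⟩ := h2
    exact Or.inr (Set.mem_iUnion.2 ⟨j, hge, hj⟩)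
  push_neg at h2
  exfalso
  apply hxi
  have hopen : IsOpen ({y : Fin d → ℝ | 1 < N y} ∩
      ⋂ j : Fin d, {y : Fin d → ℝ | if j ∈ J then ε * N y < y j else y j < ε * N y}) := by
    refine (isOpen_lt continuous_const hNc).inter (isOpen_iInter_of_finite fun j => ?_)
    by_cases hj : j ∈ J
    · simp only [hj, if_true]
      exact isOpen_lt (continuous_const.mul hNc) (continuous_apply j)
    · simp only [hj, if_false]
      exact isOpen_lt (continuous_apply j) (continuous_const.mul hNc)
  have hsub : ({y : Fin d → ℝ | 1 < N y} ∩
      ⋂ j : Fin d, {y : Fin d → ℝ | if j ∈ J then ε * N y < y j else y j < ε * N y})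
      ⊆ coneB N J ε := by
    rintro y ⟨h1y, hy⟩
    simp only [Set.mem_iInter, Set.mem_setOf_eq] at hy h1y
    refine ⟨h1y, fun j hj => ?_, fun j hj => ?_⟩
    · have := hy j; rw [if_pos hj] at this; exact this
    · have := hy j; rw [if_neg hj] at this; exact this.le
  apply interior_maximal hsub hopen
  refine ⟨lt_of_le_of_ne hge (Ne.symm h1), ?_⟩
  simp only [Set.mem_iInter, Set.mem_setOf_eq]
  intro j
  split_ifs with hj
  · exact lt_of_le_of_ne (hJle j hj) fun h => h2 j h.symm
  · exact lt_of_le_of_ne (hJge j hj) (h2 j)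

/-- there is an at most countable exceptional set `N₀ ⊂ (0,∞)` such that for
`ε ∈ (0,∞) \ N₀` the limit `L(ε) = lim_n n P[X ∈ C^ε_{n,J}]` exists, and
`L(ε) → μ({x ∈ E_J : ‖x‖ > 1})` as `ε ↓ 0` along `(0,∞) \ N₀`. -/
theorem thickened_cones_limit {d : ℕ} (hd : 0 < d)
    (μ : Measure (Fin d → ℝ)) (hμ : IsExponentMeasure μ)
    (N : (Fin d → ℝ) → ℝ) (hN : IsNorm N)
    {Ω : Type*} [MeasurableSpace Ω] (P : Measure Ω) [IsProbabilityMeasure P]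
    (X : Ω → Fin d → ℝ) (hXmeas : Measurable X) (hXpos : ∀ ω j, 0 ≤ X ω j)
    (hRV : RegularlyVarying P X μ)
    (J : Finset (Fin d)) (hJ : J.Nonempty) :
    ∃ N₀ : Set ℝ, N₀.Countable ∧ N₀ ⊆ Set.Ioi 0 ∧
      ∃ L : ℝ → ℝ,
        (∀ ε ∈ Set.Ioi (0 : ℝ) \ N₀,
          Tendsto (fun n : ℕ => (n : ℝ) * (P {ω | X ω ∈ thickCone N J ε n}).toReal)
            atTop (nhds (L ε))) ∧
        Tendsto L (nhdsWithin 0 (Set.Ioi 0 \ N₀))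
          (nhds (μ {x ∈ EJ J | 1 < N x}).toReal) := by
  classical
  have hNc : Continuous N := isnorm_continuous hN
  have hNm : Measurable N := hNc.measurable
  have hfin : μ {x | 1 ≤ N x} ≠ ⊤ := by
    refine (hμ.finite_away _ ?_).ne
    rw [(isClosed_le continuous_const hNc).closure_eq]
    simp [isnorm_zero hN]
  set Dj : Fin d → ℝ → Set (Fin d → ℝ) := fun j ε => {x | 1 ≤ N x ∧ x j = ε * N x} with hDj
  have hDjm : ∀ j ε, MeasurableSet (Dj j ε) := fun j ε =>
    (measurableSet_le measurable_const hNm).inter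
      (measurableSet_eq_fun (measurable_pi_apply j) (measurable_const.mul hNm))
  have hDcnt : ∀ j : Fin d, Set.Countable {ε : ℝ | 0 < μ (Dj j ε)} := by
    intro j
    apply MeasureTheory.Measure.countable_meas_pos_of_disjoint_of_meas_iUnion_ne_top μ
      (fun ε => hDjm j ε)
    · intro a b hab
      refine Set.disjoint_left.2 fun x hxa hxb => hab ?_
      have h0 : (0:ℝ) < N x := lt_of_lt_of_le one_pos hxa.1
      exact mul_right_cancel₀ (ne_of_gt h0) (hxa.2.symm.trans hxb.2)
    · refine ne_top_of_le_ne_top hfin (measure_mono ?_)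
      intro x hx
      simp only [Set.mem_iUnion] at hx
      obtain ⟨ε, hε⟩ := hx
      exact hε.1
  refine ⟨(⋃ j, {ε : ℝ | 0 < μ (Dj j ε)}) ∩ Set.Ioi 0,
    (Set.countable_iUnion hDcnt).mono Set.inter_subset_left, Set.inter_subset_right,
    fun ε => (μ (coneB N J ε)).toReal, ?_, ?_⟩
  · rintro ε ⟨hε0, hεN⟩
    have hε0' : (0:ℝ) < ε := hε0
    have hDnull : ∀ j, μ (Dj j ε) = 0 := by
      have h : ε ∉ ⋃ j, {ε : ℝ | 0 < μ (Dj j ε)} := fun h => hεN ⟨h, hε0⟩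
      simp only [Set.mem_iUnion, Set.mem_setOf_eq, not_exists, not_lt, nonpos_iff_eq_zero] at h
      exact h
    have hfront : μ (frontier (coneB N J ε)) = 0 := by
      refine measure_mono_null (frontier_coneB_subset hNc J ε) ?_
      apply measure_union_null
      · exact measure_norm_eq_one_zero hμ hN
      · exact measure_iUnion_null fun j => hDnull j
    have h0cl : (0 : Fin d → ℝ) ∉ closure (coneB N J ε) := by
      intro h0
      have h : closure (coneB N J ε) ⊆ {x | 1 ≤ N x} :=
        closure_minimal (fun y hy => le_of_lt hy.1) (isClosed_le continuous_const hNc)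
      have := h h0
      simp only [Set.mem_setOf_eq, isnorm_zero hN] at this
      linarith
    have hT := hRV _ (coneB_measurable hNm J ε) h0cl hfront
    refine Tendsto.congr' ?_ hT
    filter_upwards [eventually_ge_atTop 1] with n hn
    have hn' : (0:ℝ) < (n:ℝ) := by
      have : (1:ℝ) ≤ (n:ℝ) := by exact_mod_cast hn
      linarith
    have hset : {ω | (fun j => X ω j / (n:ℝ)) ∈ coneB N J ε}
        = {ω | X ω ∈ thickCone N J ε n} := by
      ext ω
      simp only [Set.mem_setOf_eq, coneB, thickCone]
      have hsm : (fun j => X ω j / (n:ℝ)) = ((n:ℝ)⁻¹) • X ω := by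
        funext j
        simp [div_eq_inv_mul]
      rw [hsm, hN.smul, abs_of_pos (inv_pos.2 hn')]
      have e1 : (1 < (n:ℝ)⁻¹ * N (X ω)) ↔ (n:ℝ) < N (X ω) := by
        rw [inv_mul_eq_div, lt_div_iff₀ hn', one_mul]
      have e2 : ∀ j : Fin d, (ε * ((n:ℝ)⁻¹ * N (X ω)) < X ω j / (n:ℝ))
          ↔ ε * N (X ω) < X ω j := by
        intro j
        rw [div_eq_inv_mul,
          show ε * ((n:ℝ)⁻¹ * N (X ω)) = (n:ℝ)⁻¹ * (ε * N (X ω)) by ring]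
        exact mul_lt_mul_iff_right₀ (inv_pos.2 hn')
      have e3 : ∀ j : Fin d, (X ω j / (n:ℝ) ≤ ε * ((n:ℝ)⁻¹ * N (X ω)))
          ↔ X ω j ≤ ε * N (X ω) := by
        intro j
        rw [div_eq_inv_mul,
          show ε * ((n:ℝ)⁻¹ * N (X ω)) = (n:ℝ)⁻¹ * (ε * N (X ω)) by ring]
        exact mul_le_mul_iff_right₀ (inv_pos.2 hn')
      constructor
      · rintro ⟨h1, h2, h3⟩
        have hlt := e1.1 h1
        refine ⟨hXpos ω, fun h0 => ?_, hlt, fun j hj => (e2 j).1 (h2 j hj),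
          fun j hj => (e3 j).1 (h3 j hj)⟩
        rw [h0, isnorm_zero hN] at hlt
        linarith
      · rintro ⟨_, _, h1, h2, h3⟩
        exact ⟨e1.2 h1, fun j hj => (e2 j).2 (h2 j hj), fun j hj => (e3 j).2 (h3 j hj)⟩
    rw [hset]
  · set T : Set (Fin d → ℝ) := {x ∈ EJ J | 1 < N x} with hTdef
    set c : ℝ := (μ T).toReal with hc
    set Gj : Fin d → ℝ → Set (Fin d → ℝ) :=
      fun j ε => {x | 1 < N x ∧ 0 < x j ∧ x j ≤ ε * N x} with hGjdef
    have hGjm : ∀ j ε, MeasurableSet (Gj j ε) := fun j ε =>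
      (measurableSet_lt measurable_const hNm).inter
        ((measurableSet_lt measurable_const (measurable_pi_apply j)).inter
          (measurableSet_le (measurable_pi_apply j) (measurable_const.mul hNm)))
    have hGfin : ∀ j ε, μ (Gj j ε) ≠ ⊤ := fun j ε =>
      ne_top_of_le_ne_top hfin (measure_mono fun x hx => hx.1.le)
    have hTfin : μ T ≠ ⊤ :=
      ne_top_of_le_ne_top hfin (measure_mono fun x hx => hx.2.le)
    have hBfin : ∀ ε, μ (coneB N J ε) ≠ ⊤ := fun ε =>
      ne_top_of_le_ne_top hfin (measure_mono fun x hx => hx.1.le)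
    set g : ℝ → ℝ := fun ε => ∑ j : Fin d, (μ (Gj j ε)).toReal with hgdef
    have hg0 : ∀ ε, 0 ≤ g ε := fun ε => Finset.sum_nonneg fun j _ => ENNReal.toReal_nonneg
    have hgmono : ∀ {a b : ℝ}, a ≤ b → g a ≤ g b := by
      intro a b hab
      refine Finset.sum_le_sum fun j _ => ?_
      refine ENNReal.toReal_mono (hGfin j b) (measure_mono ?_)
      rintro x ⟨h1, h2, h3⟩
      exact ⟨h1, h2, h3.trans (mul_le_mul_of_nonneg_right hab (hN.nonneg x))⟩
    have hkey : ∀ ε : ℝ, 0 < ε → |(μ (coneB N J ε)).toReal - c| ≤ g ε := by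
      intro ε hε
      have hstep1 : coneB N J ε ⊆ T ∪ ((⋃ j, Gj j ε) ∪ {x | ¬((∀ j, 0 ≤ x j) ∧ x ≠ 0)}) := by
        intro x hx
        obtain ⟨h1, h2, h3⟩ := hx
        by_cases hP : (∀ j, 0 ≤ x j) ∧ x ≠ 0
        · by_cases hEJ : ∀ j, (0 < x j ↔ j ∈ J)
          · exact Or.inl ⟨⟨hP.1, hP.2, hEJ⟩, h1⟩
          · push_neg at hEJ
            obtain ⟨j, hj⟩ := hEJ
            rcases hj with ⟨hxj, hjJ⟩ | ⟨hxle, hjJ⟩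
            · exact Or.inr (Or.inl (Set.mem_iUnion.2 ⟨j, h1, hxj, h3 j hjJ⟩))
            · exfalso
              have h0 : (0:ℝ) < ε * N x := mul_pos hε (lt_trans one_pos h1)
              linarith [h2 j hjJ]
        · exact Or.inr (Or.inr hP)
      have hstep2 : T ⊆ coneB N J ε ∪ ⋃ j, Gj j ε := by
        rintro x ⟨⟨hpos, hne, hiff⟩, h1⟩
        by_cases hall : ∀ j ∈ J, ε * N x < x j
        · refine Or.inl ⟨h1, hall, fun j hj => ?_⟩
          have hnpos : ¬ 0 < x j := fun h => hj ((hiff j).1 h)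
          have hz : x j = 0 := le_antisymm (not_lt.1 hnpos) (hpos j)
          rw [hz]
          exact mul_nonneg hε.le (hN.nonneg x)
        · push_neg at hall
          obtain ⟨j, hjJ, hle⟩ := hall
          exact Or.inr (Set.mem_iUnion.2 ⟨j, h1, (hiff j).2 hjJ, hle⟩)
      have hsum_ne : ∑ j : Fin d, μ (Gj j ε) ≠ ⊤ :=
        ENNReal.sum_ne_top.2 fun j _ => hGfin j ε
      have hBle : μ (coneB N J ε) ≤ μ T + ∑ j : Fin d, μ (Gj j ε) := by
        calc μ (coneB N J ε)
            ≤ μ (T ∪ ((⋃ j, Gj j ε) ∪ {x | ¬((∀ j, 0 ≤ x j) ∧ x ≠ 0)})) := measure_mono hstep1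
          _ ≤ μ T + μ ((⋃ j, Gj j ε) ∪ {x | ¬((∀ j, 0 ≤ x j) ∧ x ≠ 0)}) := measure_union_le _ _
          _ ≤ μ T + (μ (⋃ j, Gj j ε) + μ {x | ¬((∀ j, 0 ≤ x j) ∧ x ≠ 0)}) := by
              gcongr
              exact measure_union_le _ _
          _ = μ T + μ (⋃ j, Gj j ε) := by rw [hμ.concentrated, add_zero]
          _ ≤ μ T + ∑ j : Fin d, μ (Gj j ε) := by
              gcongr
              exact (measure_iUnion_le _).trans_eq (tsum_fintype _)
      have hTle : μ T ≤ μ (coneB N J ε) + ∑ j : Fin d, μ (Gj j ε) := by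
        calc μ T ≤ μ (coneB N J ε ∪ ⋃ j, Gj j ε) := measure_mono hstep2
          _ ≤ μ (coneB N J ε) + μ (⋃ j, Gj j ε) := measure_union_le _ _
          _ ≤ μ (coneB N J ε) + ∑ j : Fin d, μ (Gj j ε) := by
              gcongr
              exact (measure_iUnion_le _).trans_eq (tsum_fintype _)
      have hBle' : (μ (coneB N J ε)).toReal ≤ c + g ε := by
        have h := ENNReal.toReal_mono (ENNReal.add_ne_top.2 ⟨hTfin, hsum_ne⟩) hBle
        rwa [ENNReal.toReal_add hTfin hsum_ne,
          ENNReal.toReal_sum (fun j _ => hGfin j ε)] at h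
      have hTle' : c ≤ (μ (coneB N J ε)).toReal + g ε := by
        have h := ENNReal.toReal_mono (ENNReal.add_ne_top.2 ⟨hBfin ε, hsum_ne⟩) hTle
        rwa [ENNReal.toReal_add (hBfin ε) hsum_ne,
          ENNReal.toReal_sum (fun j _ => hGfin j ε)] at h
      rw [abs_sub_le_iff]
      constructor <;> linarith
    have hseq : Tendsto (fun n : ℕ => g (1 / ((n:ℝ) + 1))) atTop (nhds 0) := by
      have hj : ∀ j : Fin d,
          Tendsto (fun n : ℕ => (μ (Gj j (1 / ((n:ℝ) + 1)))).toReal) atTop (nhds 0) := by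
        intro j
        have hmeas : ∀ n : ℕ, NullMeasurableSet (Gj j (1 / ((n:ℝ) + 1))) μ :=
          fun n => (hGjm j _).nullMeasurableSet
        have hanti : Antitone fun n : ℕ => Gj j (1 / ((n:ℝ) + 1)) := by
          intro a b hab x hx
          obtain ⟨h1, h2, h3⟩ := hx
          refine ⟨h1, h2, h3.trans (mul_le_mul_of_nonneg_right ?_ (hN.nonneg x))⟩
          apply one_div_le_one_div_of_le (by positivity)
          have : (a:ℝ) ≤ (b:ℝ) := by exact_mod_cast hab
          linarith
        have hint : (⋂ n : ℕ, Gj j (1 / ((n:ℝ) + 1))) = ∅ := by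
          ext x
          simp only [Set.mem_iInter, Set.mem_empty_iff_false, iff_false]
          intro h
          obtain ⟨h1, h2, _⟩ := h 0
          obtain ⟨n, hn⟩ := exists_nat_gt (N x / x j)
          have h3 := (h n).2.2
          have hNx : (0:ℝ) < N x := lt_trans one_pos h1
          have hlt1 : N x / x j < (n:ℝ) + 1 := lt_trans hn (by linarith)
          have hlt2 : N x < ((n:ℝ) + 1) * x j := (div_lt_iff₀ h2).1 hlt1
          have hlt3 : 1 / ((n:ℝ) + 1) * N x < x j := by
            rw [div_mul_eq_mul_div, one_mul, div_lt_iff₀ (by positivity)]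
            linarith [mul_comm (x j) ((n:ℝ) + 1)]
          linarith
        have hlim := tendsto_measure_iInter_atTop hmeas hanti ⟨0, hGfin j _⟩
        rw [hint, measure_empty] at hlim
        have := (ENNReal.tendsto_toReal (by simp : (0:ENNReal) ≠ ⊤)).comp hlim
        exact this
      have := tendsto_finset_sum (Finset.univ : Finset (Fin d)) fun j _ => hj j
      simpa using this
    have hgto : Tendsto g (nhdsWithin 0
        (Set.Ioi 0 \ ((⋃ j, {ε : ℝ | 0 < μ (Dj j ε)}) ∩ Set.Ioi 0))) (nhds 0) := by
      rw [Metric.tendsto_nhdsWithin_nhds]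
      intro δ hδ
      obtain ⟨n, hn⟩ := (hseq.eventually (gt_mem_nhds hδ)).exists
      refine ⟨1 / ((n:ℝ) + 1), by positivity, ?_⟩
      rintro ε ⟨hε0, -⟩ hdist
      rw [Real.dist_eq, sub_zero] at hdist ⊢
      have hεle : ε ≤ 1 / ((n:ℝ) + 1) := (lt_of_abs_lt hdist).le
      rw [abs_of_nonneg (hg0 ε)]
      exact lt_of_le_of_lt (hgmono hεle) hn
    rw [tendsto_iff_dist_tendsto_zero]
    refine squeeze_zero' (Eventually.of_forall fun ε => dist_nonneg) ?_ hgto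
    filter_upwards [self_mem_nhdsWithin] with ε hε
    rw [Real.dist_eq]
    exact hkey ε hε.1
end

section
/- Let μ be an exponent-type measure on ℝ^d with unit-Fréchet margins, i.e., μ({x ∈ E : x_j > 1}) = 1 for every j ∈ D. Let J_1,…,J_r be the distinct nonempty subsets J ⊆ D with μ(E_J) > 0, and set a_{jk} = μ({y ∈ E_{J_k} : y_j > 1}) for j ∈ J_k and a_{jk} = 0 for j ∉ J_k. Then: (i) a_{jk} > 0 for every j ∈ J_k, Σ_{k=1}^r a_{jk} = 1 for every j ∈ D, and every j ∈ D lies in at least one J_k; (ii) for each k, the measure μ^{(k)} on (0,∞)^{J_k} defined by μ^{(k)}(B) = μ({x ∈ E_{J_k} : (x_j/a_{jk})_{j∈J_k} ∈ B}) is homogeneous of degree −1, finite on Borel sets whose closure does not contain the origin, and satisfies μ^{(k)}({y : y_j > 1}) = 1 for every j ∈ J_k; (iii) for every x ∈ (0,∞)^d, μ({z ∈ E : z_j > x_j for some j ∈ D}) = Σ_{k=1}^r μ^{(k)}({y ∈ (0,∞)^{J_k} : a_{jk} y_j > x_j for some j ∈ J_k}). Consequently, x ↦ exp(−μ({z ∈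 E : z_j > x_j for some j})) is the cdf of the mixture model with coefficient matrix A = (a_{jk}) (which has mutually different signatures) and independent factors Z^{(k)} with cdf exp(−μ^{(k)}({y : y_j > x_j for some j ∈ J_k})). -/
open MeasureTheory

lemma measurableSet_EJ {d : ℕ} (J : Finset (Fin d)) : MeasurableSet (EJ J) := by
  have : EJ J = ((⋂ j, {x : Fin d → ℝ | 0 ≤ x j}) ∩ {(0 : Fin d → ℝ)}ᶜ) ∩
      ⋂ j, {x : Fin d → ℝ | 0 < x j ↔ j ∈ J} := by
    ext x; simp [EJ, Set.mem_iInter, and_assoc]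
  rw [this]
  refine (MeasurableSet.inter (MeasurableSet.iInter fun j =>
      measurableSet_le measurable_const (measurable_pi_apply j))
      (MeasurableSet.singleton 0).compl).inter (MeasurableSet.iInter fun j => ?_)
  by_cases hj : j ∈ J
  · have : {x : Fin d → ℝ | 0 < x j ↔ j ∈ J} = {x | 0 < x j} := by ext x; simp [hj]
    rw [this]; exact measurableSet_lt measurable_const (measurable_pi_apply j)
  · have : {x : Fin d → ℝ | 0 < x j ↔ j ∈ J} = {x | 0 < x j}ᶜ := by ext x; simp [hj]
    rw [this]; exact (measurableSet_lt measurable_const (measurable_pi_apply j)).compl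

lemma EJ_smul_mem {d : ℕ} {J : Finset (Fin d)} {c : ℝ} (hc : 0 < c) {x : Fin d → ℝ}
    (hx : x ∈ EJ J) : c • x ∈ EJ J := by
  obtain ⟨h0, hne, hiff⟩ := hx
  refine ⟨fun j => mul_nonneg hc.le (h0 j), smul_ne_zero (ne_of_gt hc) hne, fun j => ?_⟩
  rw [← hiff j]
  simp only [Pi.smul_apply, smul_eq_mul]
  constructor
  · intro h; nlinarith [h0 j]
  · intro h; exact mul_pos hc h

lemma EJ_smul_iff {d : ℕ} {J : Finset (Fin d)} {c : ℝ} (hc : 0 < c) {x : Fin d → ℝ} :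
    c • x ∈ EJ J ↔ x ∈ EJ J := by
  constructor
  · intro h
    have := EJ_smul_mem (inv_pos.mpr hc) h
    rwa [smul_smul, inv_mul_cancel₀ (ne_of_gt hc), one_smul] at this
  · exact EJ_smul_mem hc

lemma image_smul_eq_preimage {α : Type*} [AddCommGroup α] [Module ℝ α] {c : ℝ} (hc : c ≠ 0)
    (B : Set α) : (c • ·) '' B = (fun y => c⁻¹ • y) ⁻¹' B := by
  ext y
  constructor
  · rintro ⟨z, hz, rfl⟩
    simpa [Set.mem_preimage, smul_smul, inv_mul_cancel₀ hc] using hz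
  · intro h
    exact ⟨c⁻¹ • y, h, by simp [smul_smul, mul_inv_cancel₀ hc]⟩

lemma notMem_closure_of_subset {α : Type*} [TopologicalSpace α] {S C : Set α} {z : α}
    (hSC : S ⊆ C) (hC : IsClosed C) (hz : z ∉ C) : z ∉ closure S :=
  fun h => hz (closure_minimal hSC hC h)

lemma smul_slice {d : ℕ} (J : Finset (Fin d)) (j : Fin d) {c : ℝ} (hc : 0 < c) :
    (c • ·) '' {y ∈ EJ J | 1 < y j} = {y ∈ EJ J | c < y j} := by
  ext y
  constructor
  · rintro ⟨z, ⟨hz, h1⟩, rfl⟩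
    refine ⟨(EJ_smul_iff hc).mpr hz, ?_⟩
    simpa using (mul_lt_mul_of_pos_left h1 hc)
  · rintro ⟨hy, hcy⟩
    refine ⟨c⁻¹ • y, ⟨(EJ_smul_iff (inv_pos.mpr hc)).mpr hy, ?_⟩, ?_⟩
    · simp only [Pi.smul_apply, smul_eq_mul]
      rw [lt_inv_mul_iff₀ hc, mul_one]
      exact hcy
    · show c • c⁻¹ • y = y
      rw [smul_smul, mul_inv_cancel₀ (ne_of_gt hc), one_smul]

lemma measurableSet_slice {d : ℕ} (J : Finset (Fin d)) (j : Fin d) (c : ℝ) :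
    MeasurableSet {y ∈ EJ J | c < y j} :=
  (measurableSet_EJ J).inter (measurableSet_lt measurable_const (measurable_pi_apply j))

lemma measurableSet_nonneg {d : ℕ} : MeasurableSet {x : Fin d → ℝ | ∀ i, 0 ≤ x i} := by
  have : {x : Fin d → ℝ | ∀ i, 0 ≤ x i} = ⋂ i, {x | 0 ≤ x i} := by ext x; simp
  rw [this]
  exact MeasurableSet.iInter fun i => measurableSet_le measurable_const (measurable_pi_apply i)

lemma decomp {d r : ℕ} (μ : Measure (Fin d → ℝ))
    (Js : Fin r → Finset (Fin d)) (hJs_inj : Function.Injective Js)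
    (hJs_all : ∀ J : Finset (Fin d), J.Nonempty → 0 < μ (EJ J) → ∃ k, J = Js k)
    (S : Set (Fin d → ℝ)) (hS : MeasurableSet S)
    (hSE : ∀ x ∈ S, (∀ j, 0 ≤ x j) ∧ x ≠ 0) :
    μ S = ∑ k, μ (S ∩ EJ (Js k)) := by
  have hcover : S = ⋃ J : Finset (Fin d), S ∩ EJ J := by
    ext x
    simp only [Set.mem_iUnion, Set.mem_inter_iff]
    constructor
    · intro hx
      obtain ⟨h0, hne⟩ := hSE x hx
      exact ⟨Finset.univ.filter (fun j => 0 < x j), hx, h0, hne,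
        fun j => by simp [Finset.mem_filter]⟩
    · rintro ⟨J, hx, _⟩; exact hx
  have hdisj : Pairwise (Function.onFun Disjoint (fun J : Finset (Fin d) => S ∩ EJ J)) := by
    intro J J' hJJ'
    refine Set.disjoint_left.mpr ?_
    rintro x ⟨-, -, -, hx⟩ ⟨-, -, -, hx'⟩
    exact hJJ' (Finset.ext fun j => (hx j).symm.trans (hx' j))
  have hmeas : ∀ J : Finset (Fin d), MeasurableSet (S ∩ EJ J) :=
    fun J => hS.inter (measurableSet_EJ J)
  have h1 : μ S = ∑ J : Finset (Fin d), μ (S ∩ EJ J) := by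
    conv_lhs => rw [hcover]
    rw [measure_iUnion hdisj hmeas, tsum_fintype]
  have h0 : ∀ J ∈ Finset.univ, J ∉ Finset.univ.image Js → μ (S ∩ EJ J) = 0 := by
    intro J _ hJ
    rcases Finset.eq_empty_or_nonempty J with rfl | hne
    · have hEJ : EJ (∅ : Finset (Fin d)) = ∅ := by
        ext x
        simp only [Set.mem_empty_iff_false, iff_false]
        rintro ⟨h0, hne, hiff⟩
        refine hne (funext fun j => le_antisymm ?_ (h0 j))
        by_contra h
        push_neg at h
        exact absurd ((hiff j).mp h) (Finset.notMem_empty j)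
      simp [hEJ]
    · have : μ (EJ J) = 0 := by
        by_contra h
        obtain ⟨k, rfl⟩ := hJs_all J hne (pos_iff_ne_zero.mpr h)
        exact hJ (Finset.mem_image.mpr ⟨k, Finset.mem_univ k, rfl⟩)
      exact measure_mono_null Set.inter_subset_right this
  rw [h1, ← Finset.sum_subset (Finset.subset_univ (Finset.univ.image Js)) h0,
    Finset.sum_image (fun k _ k' _ h => hJs_inj h)]

/-- Theorem 4.8: every exponent measure with unit-Fréchet margins is that of
a mixture model whose coefficient matrix has mutually different signatures: with
`a_{jk} = μ({y ∈ E_{J_k} : y_j > 1})` one has (i) positivity, unit row sums and covering;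
(ii) each factor measure `μ^{(k)}` is homogeneous of degree `-1`, finite away from the
origin and has unit-Fréchet margins; (iii) the exponent measure of the mixture model built
from `A` and the `μ^{(k)}` is `μ`, so `μ`'s mev cdf factorizes accordingly. -/
theorem mev_is_mixture_model {d r : ℕ} [NeZero d] [NeZero r]
    (μ : Measure (Fin d → ℝ)) (hμ : IsExponentMeasure μ)
    (hmarg : ∀ j : Fin d, μ {x | (∀ i, 0 ≤ x i) ∧ 1 < x j} = 1)
    -- the distinct extreme directions of μ
    (Js : Fin r → Finset (Fin d)) (hJs_inj : Function.Injective Js)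
    (hJs_ne : ∀ k, (Js k).Nonempty)
    (hJs_pos : ∀ k, 0 < μ (EJ (Js k)))
    (hJs_all : ∀ J : Finset (Fin d), J.Nonempty → 0 < μ (EJ J) → ∃ k, J = Js k)
    -- the coefficient matrix
    (a : Fin d → Fin r → ℝ)
    (ha_mem : ∀ k, ∀ j ∈ Js k, a j k = (μ {y ∈ EJ (Js k) | 1 < y j}).toReal)
    (ha_notmem : ∀ k, ∀ j ∉ Js k, a j k = 0)
    -- the factor measures μ^{(k)} on (0,∞)^{J_k}
    (μk : (k : Fin r) → Measure ({j // j ∈ Js k} → ℝ))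
    (hμk : ∀ k (B : Set ({j // j ∈ Js k} → ℝ)), MeasurableSet B →
      μk k B = μ {x ∈ EJ (Js k) | (fun j : {j // j ∈ Js k} => x j.1 / a j.1 k) ∈ B}) :
    -- (i)
    ((∀ k, ∀ j ∈ Js k, 0 < a j k) ∧ (∀ j, ∑ k, a j k = 1) ∧ ∀ j, ∃ k, j ∈ Js k) ∧
    -- (ii)
    (∀ k,
      (∀ c : ℝ, 0 < c → ∀ B : Set ({j // j ∈ Js k} → ℝ), MeasurableSet B →
        μk k ((c • ·) '' B) = (ENNReal.ofReal c)⁻¹ * μk k B) ∧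
      (∀ B : Set ({j // j ∈ Js k} → ℝ),
        (0 : {j // j ∈ Js k} → ℝ) ∉ closure B → μk k B < ⊤) ∧
      ∀ j : {j // j ∈ Js k}, μk k {y | 1 < y j} = 1) ∧
    -- (iii)
    (∀ x : Fin d → ℝ, (∀ j, 0 < x j) →
      μ {z | (∀ j, 0 ≤ z j) ∧ ∃ j, x j < z j} =
        ∑ k, μk k {y | ∃ j : {j // j ∈ Js k}, x j.1 < a j.1 k * y j}) ∧
    -- consequently the mev cdf factorizes as that of the mixture model
    ∀ x : Fin d → ℝ, (∀ j, 0 < x j) →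
      Real.exp (-(μ {z | (∀ j, 0 ≤ z j) ∧ ∃ j, x j < z j}).toReal) =
        ∏ k, Real.exp (-(μk k {y | ∃ j : {j // j ∈ Js k}, x j.1 < a j.1 k * y j}).toReal) := by
  classical
  -- finiteness of unit slices
  have slice_fin : ∀ (J : Finset (Fin d)) (j : Fin d), μ {y ∈ EJ J | 1 < y j} ≠ ⊤ := by
    intro J j
    refine (hμ.finite_away _ (notMem_closure_of_subset (C := {y : Fin d → ℝ | 1 ≤ y j})
      (fun y hy => le_of_lt hy.2)
      (isClosed_le continuous_const (continuous_apply j)) ?_)).ne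
    intro h
    have : (1 : ℝ) ≤ 0 := h
    linarith
  -- homogeneity of slices
  have slice_homog : ∀ (J : Finset (Fin d)) (j : Fin d) {c : ℝ}, 0 < c →
      μ {y ∈ EJ J | c < y j} = (ENNReal.ofReal c)⁻¹ * μ {y ∈ EJ J | 1 < y j} := by
    intro J j c hc
    rw [← smul_slice J j hc, hμ.homog c hc _ (measurableSet_slice J j 1)]
  -- positivity of unit slices
  have slice_pos : ∀ k, ∀ j ∈ Js k, 0 < μ {y ∈ EJ (Js k) | 1 < y j} := by
    intro k j hj
    by_contra h
    push_neg at h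
    have h0 : μ {y ∈ EJ (Js k) | 1 < y j} = 0 := le_antisymm h zero_le
    have hcup : EJ (Js k) ⊆ ⋃ n : ℕ, {y ∈ EJ (Js k) | (1 / ((n : ℝ) + 1)) < y j} := by
      intro y hy
      obtain ⟨n, hn⟩ := exists_nat_one_div_lt ((hy.2.2 j).mpr hj)
      exact Set.mem_iUnion.mpr ⟨n, hy, hn⟩
    have : μ (EJ (Js k)) = 0 := by
      refine measure_mono_null hcup (measure_iUnion_null fun n => ?_)
      rw [slice_homog (Js k) j (by positivity), h0, mul_zero]
    exact absurd this (hJs_pos k).ne'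
  have ha_pos : ∀ k, ∀ j ∈ Js k, 0 < a j k := by
    intro k j hj
    rw [ha_mem k j hj]
    exact ENNReal.toReal_pos (slice_pos k j hj).ne' (slice_fin (Js k) j)
  have ha_ofReal : ∀ k, ∀ j ∈ Js k, ENNReal.ofReal (a j k) = μ {y ∈ EJ (Js k) | 1 < y j} := by
    intro k j hj
    rw [ha_mem k j hj]
    exact ENNReal.ofReal_toReal (slice_fin (Js k) j)
  -- empty slices
  have slice_empty : ∀ k, ∀ j, j ∉ Js k → {y ∈ EJ (Js k) | 1 < y j} = ∅ := by
    intro k j hj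
    ext y
    simp only [Set.mem_setOf_eq, Set.mem_empty_iff_false, iff_false, not_and]
    intro hy h1
    exact hj ((hy.2.2 j).mp (lt_trans one_pos h1))
  -- row sums
  have hrow : ∀ j, ∑ k, a j k = 1 := by
    intro j
    set S := {x : Fin d → ℝ | (∀ i, 0 ≤ x i) ∧ 1 < x j} with hSdef
    have hSmeas : MeasurableSet S :=
      measurableSet_nonneg.inter (measurableSet_lt measurable_const (measurable_pi_apply j))
    have hSE : ∀ x ∈ S, (∀ i, 0 ≤ x i) ∧ x ≠ 0 := by
      rintro x ⟨h0, h1⟩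
      refine ⟨h0, fun h => ?_⟩
      rw [h] at h1
      exact absurd h1 (by norm_num)
    have hint : ∀ k, S ∩ EJ (Js k) = {y ∈ EJ (Js k) | 1 < y j} := by
      intro k
      ext y
      constructor
      · rintro ⟨⟨h0, h1⟩, hy⟩; exact ⟨hy, h1⟩
      · rintro ⟨hy, h1⟩; exact ⟨⟨hy.1, h1⟩, hy⟩
    have h1 : (1 : ENNReal) = ∑ k, μ {y ∈ EJ (Js k) | 1 < y j} := by
      rw [← hmarg j]
      rw [show {x : Fin d → ℝ | (∀ i, 0 ≤ x i) ∧ 1 < x j} = S from rfl]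
      rw [decomp μ Js hJs_inj hJs_all S hSmeas hSE]
      exact Finset.sum_congr rfl fun k _ => by rw [hint k]
    have h2 := congrArg ENNReal.toReal h1
    rw [ENNReal.toReal_one, ENNReal.toReal_sum (fun k _ => slice_fin (Js k) j)] at h2
    rw [h2]
    refine Finset.sum_congr rfl fun k _ => ?_
    by_cases hj : j ∈ Js k
    · rw [ha_mem k j hj]
    · rw [ha_notmem k j hj, slice_empty k j hj]
      simp
  -- covering
  have hcov : ∀ j, ∃ k, j ∈ Js k := by
    intro j
    by_contra h
    push_neg at h
    have : ∑ k, a j k = 0 := Finset.sum_eq_zero fun k _ => ha_notmem k j (h k)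
    rw [hrow j] at this
    exact one_ne_zero this
  -- part (ii)
  have hii : ∀ k,
      (∀ c : ℝ, 0 < c → ∀ B : Set ({j // j ∈ Js k} → ℝ), MeasurableSet B →
        μk k ((c • ·) '' B) = (ENNReal.ofReal c)⁻¹ * μk k B) ∧
      (∀ B : Set ({j // j ∈ Js k} → ℝ),
        (0 : {j // j ∈ Js k} → ℝ) ∉ closure B → μk k B < ⊤) ∧
      ∀ j : {j // j ∈ Js k}, μk k {y | 1 < y j} = 1 := by
    intro k
    have hT : Measurable (fun (x : Fin d → ℝ) (j : {j // j ∈ Js k}) => x j.1 / a j.1 k) :=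
      measurable_pi_lambda _ fun j => (measurable_pi_apply j.1).div_const _
    have hPmeas : ∀ (B : Set ({j // j ∈ Js k} → ℝ)), MeasurableSet B →
        MeasurableSet {x | x ∈ EJ (Js k) ∧ (fun j : {j // j ∈ Js k} => x j.1 / a j.1 k) ∈ B} :=
      fun B hB => (measurableSet_EJ _).inter (hT hB)
    refine ⟨?_, ?_, ?_⟩
    · -- homogeneity
      intro c hc B hB
      have hBc : MeasurableSet ((c • ·) '' B) := by
        rw [image_smul_eq_preimage (ne_of_gt hc)]
        exact hB.preimage (continuous_const_smul _).measurable
      rw [hμk k _ hBc, hμk k B hB]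
      have himg : {x | x ∈ EJ (Js k) ∧
            (fun j : {j // j ∈ Js k} => x j.1 / a j.1 k) ∈ (c • ·) '' B}
          = (c • ·) '' {x | x ∈ EJ (Js k) ∧
            (fun j : {j // j ∈ Js k} => x j.1 / a j.1 k) ∈ B} := by
        rw [image_smul_eq_preimage (ne_of_gt hc) B, image_smul_eq_preimage (ne_of_gt hc)]
        ext z
        simp only [Set.mem_setOf_eq, Set.mem_preimage]
        have hTs : (fun j : {j // j ∈ Js k} => (c⁻¹ • z) j.1 / a j.1 k)
            = c⁻¹ • (fun j : {j // j ∈ Js k} => z j.1 / a j.1 k) := by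
          funext j
          simp [Pi.smul_apply, smul_eq_mul, mul_div_assoc]
        constructor
        · rintro ⟨hz, hTz⟩
          exact ⟨(EJ_smul_iff (inv_pos.mpr hc)).mpr hz, by rw [hTs]; exact hTz⟩
        · rintro ⟨hz, hTz⟩
          rw [hTs] at hTz
          exact ⟨(EJ_smul_iff (inv_pos.mpr hc)).mp hz, hTz⟩
      rw [himg, hμ.homog c hc _ (hPmeas B hB)]
    · -- finiteness away from the origin
      intro B hB0
      rw [Metric.mem_closure_iff] at hB0
      push_neg at hB0
      obtain ⟨ε, hε, hεB⟩ := hB0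
      set C : Set ({j // j ∈ Js k} → ℝ) := ⋃ j, {y | ε ≤ |y j|} with hCdef
      have hBC : B ⊆ C := by
        intro y hy
        have h1 : ε ≤ ‖y‖ := by rw [← dist_zero_left]; exact hεB y hy
        by_contra h
        simp only [hCdef, Set.mem_iUnion, Set.mem_setOf_eq, not_exists, not_le] at h
        have : ‖y‖ < ε := (pi_norm_lt_iff hε).mpr fun j => by
          rw [Real.norm_eq_abs]; exact h j
        linarith
      have hCmeas : MeasurableSet C := MeasurableSet.iUnion fun j =>
        measurableSet_le measurable_const (measurable_pi_apply j).abs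
      refine lt_of_le_of_lt (measure_mono hBC) ?_
      rw [hμk k C hCmeas]
      refine hμ.finite_away _ (notMem_closure_of_subset
        (C := ⋃ j : {j // j ∈ Js k}, {x : Fin d → ℝ | ε * a j.1 k ≤ x j.1}) ?_ ?_ ?_)
      · rintro z ⟨hz, hTz⟩
        simp only [hCdef, Set.mem_iUnion, Set.mem_setOf_eq] at hTz ⊢
        obtain ⟨j, hj⟩ := hTz
        refine ⟨j, ?_⟩
        have ha := ha_pos k j.1 j.2
        rw [abs_of_nonneg (div_nonneg (hz.1 j.1) ha.le)] at hj
        exact (le_div_iff₀ ha).mp hj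
      · exact isClosed_iUnion_of_finite fun j =>
          isClosed_le continuous_const (continuous_apply j.1)
      · simp only [Set.mem_iUnion, Set.mem_setOf_eq, Pi.zero_apply, not_exists, not_le]
        intro j
        exact mul_pos hε (ha_pos k j.1 j.2)
    · -- unit Fréchet margins
      intro j
      have hBmeas : MeasurableSet {y : {j // j ∈ Js k} → ℝ | 1 < y j} :=
        measurableSet_lt measurable_const (measurable_pi_apply j)
      rw [hμk k _ hBmeas]
      have hset : {x | x ∈ EJ (Js k) ∧
            (fun j : {j // j ∈ Js k} => x j.1 / a j.1 k) ∈ {y | 1 < y j}}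
          = {y ∈ EJ (Js k) | a j.1 k < y j.1} := by
        ext z
        simp only [Set.mem_setOf_eq]
        refine and_congr_right fun _ => ?_
        rw [lt_div_iff₀ (ha_pos k j.1 j.2), one_mul]
      rw [hset, slice_homog _ _ (ha_pos k j.1 j.2), ← ha_ofReal k j.1 j.2]
      exact ENNReal.inv_mul_cancel (ENNReal.ofReal_pos.mpr (ha_pos k j.1 j.2)).ne'
        ENNReal.ofReal_ne_top
  -- part (iii)
  have hiii : ∀ x : Fin d → ℝ, (∀ j, 0 < x j) →
      μ {z | (∀ j, 0 ≤ z j) ∧ ∃ j, x j < z j} =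
        ∑ k, μk k {y | ∃ j : {j // j ∈ Js k}, x j.1 < a j.1 k * y j} := by
    intro x hx
    set S := {z : Fin d → ℝ | (∀ j, 0 ≤ z j) ∧ ∃ j, x j < z j} with hSdef
    have hSmeas : MeasurableSet S := by
      have h2 : MeasurableSet {z : Fin d → ℝ | ∃ j, x j < z j} := by
        have : {z : Fin d → ℝ | ∃ j, x j < z j} = ⋃ j, {z | x j < z j} := by ext z; simp
        rw [this]
        exact MeasurableSet.iUnion fun j =>
          measurableSet_lt measurable_const (measurable_pi_apply j)
      exact measurableSet_nonneg.inter h2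
    have hSE : ∀ z ∈ S, (∀ j, 0 ≤ z j) ∧ z ≠ 0 := by
      rintro z ⟨h0, j, hj⟩
      refine ⟨h0, fun h => ?_⟩
      rw [h] at hj
      have hz0 : (0 : Fin d → ℝ) j = 0 := rfl
      rw [hz0] at hj
      linarith [hx j]
    rw [decomp μ Js hJs_inj hJs_all S hSmeas hSE]
    refine Finset.sum_congr rfl fun k _ => ?_
    have hBmeas : MeasurableSet {y : {j // j ∈ Js k} → ℝ | ∃ j, x j.1 < a j.1 k * y j} := by
      have : {y : {j // j ∈ Js k} → ℝ | ∃ j, x j.1 < a j.1 k * y j}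
          = ⋃ j : {j // j ∈ Js k}, {y | x j.1 < a j.1 k * y j} := by ext y; simp
      rw [this]
      exact MeasurableSet.iUnion fun j =>
        measurableSet_lt measurable_const ((measurable_pi_apply j).const_mul _)
    rw [hμk k _ hBmeas]
    congr 1
    ext z
    simp only [hSdef, Set.mem_inter_iff, Set.mem_setOf_eq]
    constructor
    · rintro ⟨⟨h0, j, hj⟩, hz⟩
      have hjmem : j ∈ Js k := (hz.2.2 j).mp (lt_trans (hx j) hj)
      refine ⟨hz, ⟨j, hjmem⟩, ?_⟩
      have ha : a j k ≠ 0 := (ha_pos k j hjmem).ne'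
      have he : a j k * (z j / a j k) = z j := by field_simp
      rw [he]
      exact hj
    · rintro ⟨hz, j, hj⟩
      have ha : a j.1 k ≠ 0 := (ha_pos k j.1 j.2).ne'
      have he : a j.1 k * (z j.1 / a j.1 k) = z j.1 := by field_simp
      rw [he] at hj
      exact ⟨⟨hz.1, j.1, hj⟩, hz⟩
  refine ⟨⟨ha_pos, hrow, hcov⟩, hii, hiii, ?_⟩
  -- the cdf factorization
  intro x hx
  have hfin : ∀ k, μk k {y | ∃ j : {j // j ∈ Js k}, x j.1 < a j.1 k * y j} ≠ ⊤ := by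
    intro k
    refine ((hii k).2.1 _ ?_).ne
    refine notMem_closure_of_subset
      (C := ⋃ j : {j // j ∈ Js k}, {y : {j // j ∈ Js k} → ℝ | x j.1 ≤ a j.1 k * y j}) ?_ ?_ ?_
    · rintro y ⟨j, hj⟩
      exact Set.mem_iUnion.mpr ⟨j, hj.le⟩
    · exact isClosed_iUnion_of_finite fun j =>
        isClosed_le continuous_const (continuous_const.mul (continuous_apply j))
    · simp only [Set.mem_iUnion, Set.mem_setOf_eq, Pi.zero_apply, mul_zero,
        not_exists, not_le]
      intro j
      exact hx j.1
  rw [hiii x hx, ENNReal.toReal_sum (fun k _ => hfin k), ← Finset.sum_neg_distrib,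
    Real.exp_sum]
end

section
/- Let U be the mixture generator with coefficient matrix A, generators U^{(1)},…,U^{(r)} and mass vector m ∈ (0,1)^r (Σ_k m_k = 1), and let T be the associated T-generator. Set ℓ(1) = Σ_{k∈R} ℓ^{(k)}((a_{jk})_{j∈J_k}) and w_k = ℓ^{(k)}((a_{jk})_{j∈J_k})/ℓ(1). Let P^{(k)} = U^{(k)} + (ln(a_{jk}/m_k))_{j∈J_k} and let T^{(k)} be the ℝ^{J_k}-valued random vector with law P[T^{(k)} ∈ C] = E[e^{max P^{(k)}} 1{P^{(k)} ∈ C}]/E[e^{max P^{(k)}}]. Then P[T ∈ B] = Σ_{k∈R} w_k P[T^{(k)} ∈ π_{J_k}(A_{J_k} ∩ B)] for every Borel B ⊆ [−∞,∞)^d. Moreover, if U^{(k)} has Lebesgue density f_{U^{(k)}} on ℝ^{J_k}, then T^{(k)} has Lebesgue density f_{T^{(k)}}(t) = c^{(k)} g_k(t) Σ_{j∈J_k} n_{j,k} q_{j,k}(t), where g_k(t) = e^{max t}/Σ_{j∈J_k} e^{t_j}, c^{(k)} = (Σ_{j∈J_k} a_{jk})/ℓ^{(k)}((a_{jk})_{j∈J_k}),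 n_{j,k} = a_{jk}/Σ_{i∈J_k} a_{ik}, and q_{j,k}(t) = (m_k/a_{jk}) e^{t_j} f_{U^{(k)}}(t − (ln(a_{ik}/m_k))_{i∈J_k}). -/
open MeasureTheory ProbabilityTheory
open scoped Classical ENNReal NNReal

/-- A mixture coefficient matrix: entries in `[0,1]`, unit row sums, positive column sums. -/
structure MixCoeff (d r : ℕ) (A : Fin d → Fin r → ℝ) : Prop where
  mem_Icc : ∀ j k, A j k ∈ Set.Icc (0 : ℝ) 1
  row_sum : ∀ j, ∑ k, A j k = 1
  col_sum : ∀ k, 0 < ∑ j, A j k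

/-- The `k`-th signature `J_k = {j : a_{jk} > 0}`. -/
noncomputable def sig {d r : ℕ} (A : Fin d → Fin r → ℝ) (k : Fin r) : Finset (Fin d) :=
  Finset.univ.filter (fun j => 0 < A j k)

/-- `e^x` for `x ∈ [-∞,∞)`, with `e^{-∞} = 0`. -/
noncomputable def eexp (x : EReal) : ℝ := if x = ⊥ then 0 else Real.exp x.toReal

/-- The embedding `ι_{J_k} : ℝ^{J_k} → [-∞,∞)^d`. -/
noncomputable def embA {d r : ℕ} (A : Fin d → Fin r → ℝ) (k : Fin r)
    (x : {j // j ∈ sig A k} → ℝ) : Fin d → EReal :=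
  fun j => if h : j ∈ sig A k then ((x ⟨j, h⟩ : ℝ) : EReal) else ⊥

section sups
variable {ι : Type*} [Fintype ι] [Nonempty ι]

lemma my_ciSup_le_ciSup {g h : ι → ℝ} (hle : ∀ i, g i ≤ h i) : (⨆ i, g i) ≤ ⨆ i, h i :=
  ciSup_le fun i => (hle i).trans (le_ciSup (Set.Finite.bddAbove (Set.finite_range h)) i)

lemma my_le_ciSup (g : ι → ℝ) (i : ι) : g i ≤ ⨆ i, g i :=
  le_ciSup (Set.Finite.bddAbove (Set.finite_range g)) i

lemma measurable_sup' {α : Type*} [MeasurableSpace α] {ι' : Type*} (s : Finset ι') (hs : s.Nonempty)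
    (g : ι' → α → ℝ) (hg : ∀ i, Measurable (g i)) :
    Measurable fun a => s.sup' hs fun i => g i a := by
  induction hs using Finset.Nonempty.cons_induction with
  | singleton i => simpa using hg i
  | cons i s hi hs ih =>
      have : (fun a => (Finset.cons i s hi).sup' (Finset.cons_nonempty hi) fun j => g j a)
          = fun a => g i a ⊔ s.sup' hs fun j => g j a := by
        funext a; rw [Finset.sup'_cons]
      rw [this]
      exact (hg i).sup ih

lemma measurable_ciSup {α : Type*} [MeasurableSpace α] {g : ι → α → ℝ}
    (hg : ∀ i, Measurable (g i)) : Measurable fun a => ⨆ i, g i a := by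
  have : (fun a => ⨆ i, g i a)
      = fun a => Finset.univ.sup' Finset.univ_nonempty fun i => g i a := by
    funext a; rw [Finset.sup'_univ_eq_ciSup]
  rw [this]; exact measurable_sup' _ _ g hg

lemma exp_ciSup (g : ι → ℝ) : Real.exp (⨆ i, g i) = ⨆ i, Real.exp (g i) := by
  rw [← Finset.sup'_univ_eq_ciSup g, ← Finset.sup'_univ_eq_ciSup fun i => Real.exp (g i)]
  exact Finset.comp_sup'_eq_sup'_comp _ Real.exp fun x y =>
    (Real.exp_monotone).map_max

lemma const_mul_ciSup (c : ℝ) (hc : 0 ≤ c) (g : ι → ℝ) : c * (⨆ i, g i) = ⨆ i, c * g i := by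
  rw [← Finset.sup'_univ_eq_ciSup g, ← Finset.sup'_univ_eq_ciSup fun i => c * g i]
  exact Finset.comp_sup'_eq_sup'_comp _ (fun x => c * x) fun x y =>
    (Monotone.map_max fun a b hab => mul_le_mul_of_nonneg_left hab hc)

end sups

lemma integrable_of_integral_eq_one {α : Type*} [MeasurableSpace α] {μ : Measure α} {g : α → ℝ}
    (h : ∫ a, g a ∂μ = 1) : Integrable g μ := by
  by_contra hc
  rw [integral_undef hc] at h
  exact one_ne_zero h.symm

section lemmaX
variable {α : Type*} [MeasurableSpace α] {μ : Measure α}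

lemma simplefunc_support_measurable (g : SimpleFunc α ℝ≥0) : MeasurableSet (Function.support ⇑g) := by
  have : Function.support ⇑g = ⇑g ⁻¹' {0}ᶜ := by ext x; simp [Function.mem_support]
  rw [this]
  exact (g.measurableSet_fiber 0).compl

lemma auxX1 (h : α → ℝ≥0∞) (ψ : SimpleFunc α ℝ≥0) :
    ∫⁻ x, (ψ x : ℝ≥0∞) ∂(μ.withDensity h) ≤ ∫⁻ x, (ψ x : ℝ≥0∞) * h x ∂μ := by
  induction ψ using SimpleFunc.induction with
  | const c hs =>
      rename_i s
      have hcoe : ∀ x, (((SimpleFunc.piecewise s hs (SimpleFunc.const α c)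
          (SimpleFunc.const α 0)) x : ℝ≥0) : ℝ≥0∞) = s.indicator (fun _ => (c : ℝ≥0∞)) x := by
        intro x; by_cases hx : x ∈ s <;> simp [SimpleFunc.piecewise_apply, hx]
      calc ∫⁻ x, (((SimpleFunc.piecewise s hs (SimpleFunc.const α c)
            (SimpleFunc.const α 0)) x : ℝ≥0) : ℝ≥0∞) ∂(μ.withDensity h)
          = ∫⁻ x, s.indicator (fun _ => (c : ℝ≥0∞)) x ∂(μ.withDensity h) :=
            lintegral_congr hcoe
        _ = (c : ℝ≥0∞) * (μ.withDensity h) s := by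
            rw [lintegral_indicator hs, setLIntegral_const]
        _ = (c : ℝ≥0∞) * ∫⁻ x in s, h x ∂μ := by rw [withDensity_apply h hs]
        _ = ∫⁻ x, (c : ℝ≥0∞) * s.indicator h x ∂μ := by
            rw [← lintegral_indicator hs, ← lintegral_const_mul' _ _ ENNReal.coe_ne_top]
        _ ≤ ∫⁻ x, (((SimpleFunc.piecewise s hs (SimpleFunc.const α c)
              (SimpleFunc.const α 0)) x : ℝ≥0) : ℝ≥0∞) * h x ∂μ := by
            refine lintegral_mono fun x => ?_
            rw [hcoe x]
            by_cases hx : x ∈ s <;> simp [hx]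
  | add hdisj ihf ihg =>
      rename_i f g
      calc ∫⁻ x, (((f + g) x : ℝ≥0) : ℝ≥0∞) ∂(μ.withDensity h)
          = ∫⁻ x, ((f x : ℝ≥0∞) + (g x : ℝ≥0∞)) ∂(μ.withDensity h) :=
            lintegral_congr fun x => by simp
        _ = (∫⁻ x, (f x : ℝ≥0∞) ∂(μ.withDensity h))
            + ∫⁻ x, (g x : ℝ≥0∞) ∂(μ.withDensity h) :=
            lintegral_add_left f.measurable.coe_nnreal_ennreal _
        _ ≤ (∫⁻ x, (f x : ℝ≥0∞) * h x ∂μ) + ∫⁻ x, (g x : ℝ≥0∞) * h x ∂μ := add_le_add ihf ihg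
        _ ≤ ∫⁻ x, ((f x : ℝ≥0∞) * h x + (g x : ℝ≥0∞) * h x) ∂μ := le_lintegral_add _ _
        _ = ∫⁻ x, (((f + g) x : ℝ≥0) : ℝ≥0∞) * h x ∂μ :=
            lintegral_congr fun x => by simp [add_mul]

lemma auxX2 (h : α → ℝ≥0∞) {G : α → ℝ≥0∞} (hG : Measurable G) (hGfin : ∀ x, G x ≠ ∞)
    (ψ : SimpleFunc α ℝ≥0) (hle : ∀ x, (ψ x : ℝ≥0∞) ≤ G x * h x) :
    ∫⁻ x, (ψ x : ℝ≥0∞) ∂μ ≤ ∫⁻ x in Function.support ⇑ψ, G x ∂(μ.withDensity h) := by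
  induction ψ using SimpleFunc.induction with
  | const c hs =>
      rename_i s
      have hcoe : ∀ x, (((SimpleFunc.piecewise s hs (SimpleFunc.const α c)
          (SimpleFunc.const α 0)) x : ℝ≥0) : ℝ≥0∞) = s.indicator (fun _ => (c : ℝ≥0∞)) x := by
        intro x; by_cases hx : x ∈ s <;> simp [SimpleFunc.piecewise_apply, hx]
      by_cases hc : c = 0
      · have : ∀ x, (((SimpleFunc.piecewise s hs (SimpleFunc.const α c)
            (SimpleFunc.const α 0)) x : ℝ≥0) : ℝ≥0∞) = 0 := by
          intro x; rw [hcoe x]; by_cases hx : x ∈ s <;> simp [hx, hc]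
        rw [lintegral_congr this, lintegral_zero]
        exact zero_le
      · have hGs : ∀ x ∈ s, G x ≠ 0 := by
          intro x hx hGx
          have h1 := hle x
          rw [hcoe x, Set.indicator_of_mem hx, hGx, zero_mul, nonpos_iff_eq_zero] at h1
          exact hc (by exact_mod_cast h1)
        have hsupp : Function.support ⇑(SimpleFunc.piecewise s hs (SimpleFunc.const α c)
            (SimpleFunc.const α 0)) = s := by
          ext x
          by_cases hx : x ∈ s <;>
            simp [Function.mem_support, SimpleFunc.piecewise_apply, hx, hc]
        set h₀ : α → ℝ≥0∞ := fun x => if x ∈ s ∧ G x ≠ 0 then (c : ℝ≥0∞) / G x else 0 with hh₀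
        have hset : MeasurableSet {x | x ∈ s ∧ G x ≠ 0} := by
          have : {x | x ∈ s ∧ G x ≠ 0} = s ∩ G ⁻¹' ({0}ᶜ) := by
            ext x; simp [Set.mem_inter_iff]
          rw [this]
          exact hs.inter (hG (measurableSet_singleton 0).compl)
        have h₀meas : Measurable h₀ :=
          Measurable.ite hset (measurable_const.div hG) measurable_const
        have h₀le : h₀ ≤ h := by
          intro x
          rw [hh₀]
          dsimp only
          split
          · rename_i hx
            rw [ENNReal.div_le_iff_le_mul (Or.inl hx.2) (Or.inl (hGfin x))]
            have h1 := hle x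
            rw [hcoe x, Set.indicator_of_mem hx.1] at h1
            rwa [mul_comm] at h1
          · exact zero_le
        have hpt : ∀ x, s.indicator (fun _ => (c : ℝ≥0∞)) x ≤ G x * h₀ x := by
          intro x
          by_cases hx : x ∈ s
          · rw [Set.indicator_of_mem hx, hh₀]
            dsimp only
            rw [if_pos ⟨hx, hGs x hx⟩, ENNReal.mul_div_cancel (hGs x hx) (hGfin x)]
          · simp [Set.indicator_of_notMem hx]
        have hax : ∀ x, h₀ x ≤ s.indicator h x := by
          intro x
          by_cases hx : x ∈ s
          · rw [Set.indicator_of_mem hx]; exact h₀le x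
          · have : h₀ x = 0 := by rw [hh₀]; dsimp only; rw [if_neg (by tauto)]
            rw [this, Set.indicator_of_notMem hx]
        have hmle : μ.withDensity h₀ ≤ (μ.withDensity h).restrict s := by
          refine Measure.le_iff.mpr fun t ht => ?_
          rw [withDensity_apply h₀ ht, Measure.restrict_apply ht,
            withDensity_apply h (ht.inter hs)]
          calc ∫⁻ x in t, h₀ x ∂μ ≤ ∫⁻ x in t, s.indicator h x ∂μ :=
                lintegral_mono fun x => hax x
            _ = ∫⁻ x in s, h x ∂(μ.restrict t) := lintegral_indicator hs h
            _ = ∫⁻ x in t ∩ s, h x ∂μ := by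
                rw [Measure.restrict_restrict hs, Set.inter_comm]
        calc ∫⁻ x, (((SimpleFunc.piecewise s hs (SimpleFunc.const α c)
              (SimpleFunc.const α 0)) x : ℝ≥0) : ℝ≥0∞) ∂μ
            = ∫⁻ x, s.indicator (fun _ => (c : ℝ≥0∞)) x ∂μ := lintegral_congr hcoe
          _ ≤ ∫⁻ x, G x * h₀ x ∂μ := lintegral_mono hpt
          _ = ∫⁻ x, G x ∂(μ.withDensity h₀) := by
              rw [lintegral_withDensity_eq_lintegral_mul μ h₀meas hG]
              exact lintegral_congr fun x => (mul_comm _ _)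
          _ ≤ ∫⁻ x, G x ∂((μ.withDensity h).restrict s) := lintegral_mono' hmle le_rfl
          _ = ∫⁻ x in Function.support ⇑(SimpleFunc.piecewise s hs (SimpleFunc.const α c)
              (SimpleFunc.const α 0)), G x ∂(μ.withDensity h) := by rw [hsupp]
  | add hdisj ihf ihg =>
      rename_i f g
      have hlef : ∀ x, ((f x : ℝ≥0) : ℝ≥0∞) ≤ G x * h x := by
        intro x
        refine le_trans ?_ (hle x)
        simp only [SimpleFunc.coe_add, Pi.add_apply, ENNReal.coe_add]
        exact le_self_add
      have hleg : ∀ x, ((g x : ℝ≥0) : ℝ≥0∞) ≤ G x * h x := by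
        intro x
        refine le_trans ?_ (hle x)
        simp only [SimpleFunc.coe_add, Pi.add_apply, ENNReal.coe_add]
        exact le_add_self
      have hsupp : Function.support ⇑(f + g) = Function.support ⇑f ∪ Function.support ⇑g := by
        ext x
        simp only [Function.mem_support, Set.mem_union, SimpleFunc.coe_add, Pi.add_apply,
          ne_eq, add_eq_zero, not_and_or]
      calc ∫⁻ x, (((f + g) x : ℝ≥0) : ℝ≥0∞) ∂μ
          = ∫⁻ x, ((f x : ℝ≥0∞) + (g x : ℝ≥0∞)) ∂μ := lintegral_congr fun x => by simp
        _ = (∫⁻ x, (f x : ℝ≥0∞) ∂μ) + ∫⁻ x, (g x : ℝ≥0∞) ∂μ :=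
            lintegral_add_left f.measurable.coe_nnreal_ennreal _
        _ ≤ (∫⁻ x in Function.support ⇑f, G x ∂(μ.withDensity h))
            + ∫⁻ x in Function.support ⇑g, G x ∂(μ.withDensity h) :=
            add_le_add (ihf hlef) (ihg hleg)
        _ = ∫⁻ x, G x ∂((μ.withDensity h).restrict (Function.support ⇑f)
            + (μ.withDensity h).restrict (Function.support ⇑g)) :=
            (lintegral_add_measure _ _ _).symm
        _ = ∫⁻ x in Function.support ⇑(f + g), G x ∂(μ.withDensity h) := by
            rw [hsupp, Measure.restrict_union hdisj (simplefunc_support_measurable g)]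

lemma lintegral_withDensity_arb (h : α → ℝ≥0∞) {G : α → ℝ≥0∞} (hG : Measurable G)
    (hGfin : ∀ x, G x ≠ ∞) :
    ∫⁻ x, G x ∂(μ.withDensity h) = ∫⁻ x, G x * h x ∂μ := by
  refine le_antisymm ?_ ?_
  · rw [lintegral_eq_nnreal G (μ.withDensity h)]
    refine iSup₂_le fun φ hφ => ?_
    calc (φ.map ((↑) : ℝ≥0 → ℝ≥0∞)).lintegral (μ.withDensity h)
        = ∫⁻ x, ((φ x : ℝ≥0) : ℝ≥0∞) ∂(μ.withDensity h) := by
          rw [← SimpleFunc.lintegral_eq_lintegral]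
          exact lintegral_congr fun x => by simp
      _ ≤ ∫⁻ x, ((φ x : ℝ≥0) : ℝ≥0∞) * h x ∂μ := auxX1 h φ
      _ ≤ ∫⁻ x, G x * h x ∂μ := lintegral_mono fun x => mul_le_mul_left (hφ x) _
  · rw [lintegral_eq_nnreal (fun x => G x * h x) μ]
    refine iSup₂_le fun φ hφ => ?_
    calc (φ.map ((↑) : ℝ≥0 → ℝ≥0∞)).lintegral μ
        = ∫⁻ x, ((φ x : ℝ≥0) : ℝ≥0∞) ∂μ := by
          rw [← SimpleFunc.lintegral_eq_lintegral]
          exact lintegral_congr fun x => by simp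
      _ ≤ ∫⁻ x in Function.support ⇑φ, G x ∂(μ.withDensity h) := auxX2 h hG hGfin φ hφ
      _ ≤ ∫⁻ x, G x ∂(μ.withDensity h) := lintegral_mono' Measure.restrict_le_self le_rfl

end lemmaX

section basicdefs
variable {d r : ℕ} {A : Fin d → Fin r → ℝ} {k : Fin r}

lemma sig_nonempty (hA : MixCoeff d r A) (k : Fin r) : Nonempty {j // j ∈ sig A k} := by
  by_contra h
  have hz : ∀ j : Fin d, ¬ (0 < A j k) := fun j hj =>
    h ⟨⟨j, by simp [sig, hj]⟩⟩
  have h1 : ∑ j, A j k ≤ 0 := Finset.sum_nonpos fun j _ => le_of_not_gt (hz j)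
  linarith [hA.col_sum k]

lemma sig_pos {j : Fin d} (hj : j ∈ sig A k) : 0 < A j k := by simpa [sig] using hj

lemma eexp_coe (y : ℝ) : eexp ((y : ℝ) : EReal) = Real.exp y := by
  simp [eexp]

lemma measurable_eexp : Measurable eexp := by
  have : Measurable fun x : EReal => if x = ⊥ then (0 : ℝ) else Real.exp x.toReal := by
    refine Measurable.ite ?_ measurable_const (Real.measurable_exp.comp measurable_ereal_toReal)
    simpa using measurableSet_singleton (⊥ : EReal)
  exact this

lemma measurable_embA (A : Fin d → Fin r → ℝ) (k : Fin r) : Measurable (embA A k) := by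
  refine measurable_pi_lambda _ fun j => ?_
  by_cases h : j ∈ sig A k
  · simp only [embA, dif_pos h]
    exact measurable_coe_real_ereal.comp (measurable_pi_apply _)
  · simp only [embA, dif_neg h]
    exact measurable_const

lemma iSup_embA (hne : Nonempty {j // j ∈ sig A k}) (x : {j // j ∈ sig A k} → ℝ) :
    (⨆ j : Fin d, embA A k x j) = (((⨆ j, x j : ℝ)) : EReal) := by
  haveI := hne
  apply le_antisymm
  · refine iSup_le fun j => ?_
    by_cases h : j ∈ sig A k
    · simp only [embA, dif_pos h]
      exact EReal.coe_le_coe_iff.mpr (my_le_ciSup x ⟨j, h⟩)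
    · simp only [embA, dif_neg h]
      exact bot_le
  · obtain ⟨j₀, hj₀⟩ := exists_eq_ciSup_of_finite (f := x)
    rw [← hj₀]
    have hx : ((x j₀ : ℝ) : EReal) = embA A k x j₀.1 := by
      simp only [embA, dif_pos j₀.2]
    rw [hx]
    exact le_iSup (fun j => embA A k x j) j₀.1

lemma eexp_iSup_embA (hne : Nonempty {j // j ∈ sig A k}) (x : {j // j ∈ sig A k} → ℝ) :
    eexp (⨆ j : Fin d, embA A k x j) = Real.exp (⨆ j, x j) := by
  rw [iSup_embA hne, eexp_coe]

end basicdefs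

section perk
variable {d r : ℕ} {A : Fin d → Fin r → ℝ} {k : Fin r}
  {Ω : Type*} [MeasurableSpace Ω] {P : Measure Ω} [IsProbabilityMeasure P]
  {Uk : Ω → ({j // j ∈ sig A k} → ℝ)}

lemma measurable_Ssup (hA : MixCoeff d r A) (hUkmeas : Measurable Uk) :
    Measurable fun ω => ⨆ j : {j // j ∈ sig A k}, A j.1 k * Real.exp (Uk ω j) := by
  haveI := sig_nonempty hA k
  exact measurable_ciSup fun j =>
    measurable_const.mul (Real.measurable_exp.comp ((measurable_pi_apply j).comp hUkmeas))

lemma integrable_exp_Uk (hUknorm : ∀ j, ∫ ω, Real.exp (Uk ω j) ∂P = 1)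
    (j : {j // j ∈ sig A k}) : Integrable (fun ω => Real.exp (Uk ω j)) P :=
  _root_.integrable_of_integral_eq_one (hUknorm j)

lemma Ssup_nonneg (hA : MixCoeff d r A) (ω : Ω) :
    0 ≤ ⨆ j : {j // j ∈ sig A k}, A j.1 k * Real.exp (Uk ω j) := by
  haveI := sig_nonempty hA k
  obtain ⟨j₀⟩ := sig_nonempty hA k
  exact le_trans (mul_nonneg (sig_pos j₀.2).le (Real.exp_pos _).le)
    (my_le_ciSup (fun j => A j.1 k * Real.exp (Uk ω j)) j₀)

lemma Ssup_le_sum (hA : MixCoeff d r A) (ω : Ω) :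
    (⨆ j : {j // j ∈ sig A k}, A j.1 k * Real.exp (Uk ω j))
      ≤ ∑ j : {j // j ∈ sig A k}, A j.1 k * Real.exp (Uk ω j) := by
  haveI := sig_nonempty hA k
  exact ciSup_le fun j => Finset.single_le_sum
    (fun i _ => mul_nonneg (sig_pos i.2).le (Real.exp_pos _).le) (Finset.mem_univ j)

lemma integrable_Ssup (hA : MixCoeff d r A) (hUkmeas : Measurable Uk)
    (hUknorm : ∀ j, ∫ ω, Real.exp (Uk ω j) ∂P = 1) :
    Integrable (fun ω => ⨆ j : {j // j ∈ sig A k}, A j.1 k * Real.exp (Uk ω j)) P := by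
  haveI := sig_nonempty hA k
  refine Integrable.mono' (g := fun ω => ∑ j : {j // j ∈ sig A k}, A j.1 k * Real.exp (Uk ω j))
    (integrable_finset_sum _ fun j _ => (integrable_exp_Uk hUknorm j).const_mul _)
    (measurable_Ssup hA hUkmeas).aestronglyMeasurable
    (ae_of_all _ fun ω => ?_)
  rw [Real.norm_eq_abs, abs_of_nonneg (Ssup_nonneg hA ω)]
  exact Ssup_le_sum hA ω

lemma L_pos (hA : MixCoeff d r A) (hUkmeas : Measurable Uk)
    (hUknorm : ∀ j, ∫ ω, Real.exp (Uk ω j) ∂P = 1) :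
    0 < ∫ ω, (⨆ j : {j // j ∈ sig A k}, A j.1 k * Real.exp (Uk ω j)) ∂P := by
  haveI := sig_nonempty hA k
  obtain ⟨j₀⟩ := sig_nonempty hA k
  have h1 : Integrable (fun ω => A j₀.1 k * Real.exp (Uk ω j₀)) P :=
    (integrable_exp_Uk hUknorm j₀).const_mul _
  have h2 := integral_mono h1 (integrable_Ssup hA hUkmeas hUknorm)
    (fun ω => my_le_ciSup (fun j => A j.1 k * Real.exp (Uk ω j)) j₀)
  have h3 : ∫ ω, A j₀.1 k * Real.exp (Uk ω j₀) ∂P = A j₀.1 k := by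
    rw [integral_const_mul, hUknorm j₀, mul_one]
  calc (0:ℝ) < A j₀.1 k := sig_pos j₀.2
    _ = ∫ ω, A j₀.1 k * Real.exp (Uk ω j₀) ∂P := h3.symm
    _ ≤ _ := h2

lemma exp_sup_V (hA : MixCoeff d r A) {mk : ℝ} (hmk : 0 < mk) (u : {j // j ∈ sig A k} → ℝ) :
    Real.exp (⨆ j : {j // j ∈ sig A k}, (u j + Real.log (A j.1 k / mk)))
      = mk⁻¹ * ⨆ j : {j // j ∈ sig A k}, A j.1 k * Real.exp (u j) := by
  haveI := sig_nonempty hA k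
  rw [exp_ciSup]
  rw [const_mul_ciSup _ (inv_nonneg.mpr hmk.le)]
  congr 1
  funext j
  rw [Real.exp_add, Real.exp_log (div_pos (sig_pos j.2) hmk)]
  field_simp

end perk

section perk2
variable {d r : ℕ} {A : Fin d → Fin r → ℝ} {k : Fin r}
  {Ω : Type*} [MeasurableSpace Ω] {P : Measure Ω} [IsProbabilityMeasure P]
  {Uk : Ω → ({j // j ∈ sig A k} → ℝ)}

lemma measurable_V (hUkmeas : Measurable Uk) (mk : ℝ) :
    Measurable fun ω => (fun j : {j // j ∈ sig A k} => Uk ω j + Real.log (A j.1 k / mk)) :=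
  measurable_pi_lambda _ fun j =>
    (((measurable_pi_apply j).comp hUkmeas).add_const _)

lemma measurable_exp_sup_V (hA : MixCoeff d r A) (hUkmeas : Measurable Uk) (mk : ℝ) :
    Measurable fun ω =>
      Real.exp (⨆ j : {j // j ∈ sig A k}, (Uk ω j + Real.log (A j.1 k / mk))) := by
  haveI := sig_nonempty hA k
  exact Real.measurable_exp.comp (measurable_ciSup fun j =>
    ((measurable_pi_apply j).comp hUkmeas).add_const _)

lemma integral_exp_sup_V (hA : MixCoeff d r A) {mk : ℝ} (hmk : 0 < mk) :
    ∫ ω, Real.exp (⨆ j : {j // j ∈ sig A k}, (Uk ω j + Real.log (A j.1 k / mk))) ∂P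
      = mk⁻¹ * ∫ ω, (⨆ j : {j // j ∈ sig A k}, A j.1 k * Real.exp (Uk ω j)) ∂P := by
  have h1 : (fun ω => Real.exp (⨆ j : {j // j ∈ sig A k}, (Uk ω j + Real.log (A j.1 k / mk))))
      = fun ω => mk⁻¹ * ⨆ j : {j // j ∈ sig A k}, A j.1 k * Real.exp (Uk ω j) :=
    funext fun ω => exp_sup_V hA hmk (Uk ω)
  rw [h1, integral_const_mul]

lemma integrable_exp_sup_V (hA : MixCoeff d r A) (hUkmeas : Measurable Uk)
    (hUknorm : ∀ j, ∫ ω, Real.exp (Uk ω j) ∂P = 1) {mk : ℝ} (hmk : 0 < mk) :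
    Integrable (fun ω =>
      Real.exp (⨆ j : {j // j ∈ sig A k}, (Uk ω j + Real.log (A j.1 k / mk)))) P := by
  have h1 : (fun ω => Real.exp (⨆ j : {j // j ∈ sig A k}, (Uk ω j + Real.log (A j.1 k / mk))))
      = fun ω => mk⁻¹ * ⨆ j : {j // j ∈ sig A k}, A j.1 k * Real.exp (Uk ω j) :=
    funext fun ω => exp_sup_V hA hmk (Uk ω)
  rw [h1]
  exact (integrable_Ssup hA hUkmeas hUknorm).const_mul _

lemma measurable_indicator_V (hA : MixCoeff d r A) (hUkmeas : Measurable Uk) (mk : ℝ)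
    {C : Set ({j // j ∈ sig A k} → ℝ)} (hC : MeasurableSet C) :
    Measurable fun ω =>
      (if (fun j : {j // j ∈ sig A k} => Uk ω j + Real.log (A j.1 k / mk)) ∈ C
        then Real.exp (⨆ j : {j // j ∈ sig A k}, (Uk ω j + Real.log (A j.1 k / mk)))
        else 0) :=
  Measurable.ite (measurable_V hUkmeas mk hC) (measurable_exp_sup_V hA hUkmeas mk)
    measurable_const

lemma indicator_V_nonneg (hA : MixCoeff d r A) (mk : ℝ)
    (C : Set ({j // j ∈ sig A k} → ℝ)) (ω : Ω) :
    0 ≤ (if (fun j : {j // j ∈ sig A k} => Uk ω j + Real.log (A j.1 k / mk)) ∈ C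
        then Real.exp (⨆ j : {j // j ∈ sig A k}, (Uk ω j + Real.log (A j.1 k / mk)))
        else 0) := by
  split
  · exact (Real.exp_pos _).le
  · exact le_rfl

lemma integrable_indicator_V (hA : MixCoeff d r A) (hUkmeas : Measurable Uk)
    (hUknorm : ∀ j, ∫ ω, Real.exp (Uk ω j) ∂P = 1) {mk : ℝ} (hmk : 0 < mk)
    {C : Set ({j // j ∈ sig A k} → ℝ)} (hC : MeasurableSet C) :
    Integrable (fun ω =>
      (if (fun j : {j // j ∈ sig A k} => Uk ω j + Real.log (A j.1 k / mk)) ∈ C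
        then Real.exp (⨆ j : {j // j ∈ sig A k}, (Uk ω j + Real.log (A j.1 k / mk)))
        else 0)) P := by
  refine Integrable.mono' (integrable_exp_sup_V hA hUkmeas hUknorm hmk)
    (measurable_indicator_V hA hUkmeas mk hC).aestronglyMeasurable (ae_of_all _ fun ω => ?_)
  rw [Real.norm_eq_abs, abs_of_nonneg (indicator_V_nonneg hA mk C ω)]
  split
  · exact le_rfl
  · exact (Real.exp_pos _).le

end perk2

lemma density_k {d r : ℕ} {A : Fin d → Fin r → ℝ} (hA : MixCoeff d r A) (k : Fin r)
    {Ω : Type*} [MeasurableSpace Ω] {P : Measure Ω} [IsProbabilityMeasure P]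
    {Uk : Ω → ({j // j ∈ sig A k} → ℝ)} (hUkmeas : Measurable Uk)
    (hUknorm : ∀ j, ∫ ω, Real.exp (Uk ω j) ∂P = 1) {mk : ℝ} (hmk : 0 < mk)
    (Tk : Ω → ({j // j ∈ sig A k} → ℝ)) (hTkmeas : Measurable Tk)
    (hTklaw : ∀ C : Set ({j // j ∈ sig A k} → ℝ), MeasurableSet C →
      (P {ω | Tk ω ∈ C}).toReal =
        (∫ ω, (if (fun j : {j // j ∈ sig A k} => Uk ω j + Real.log (A j.1 k / mk)) ∈ C
            then Real.exp (⨆ j : {j // j ∈ sig A k}, (Uk ω j + Real.log (A j.1 k / mk)))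
            else 0) ∂P) /
          ∫ ω, Real.exp (⨆ j : {j // j ∈ sig A k},
            (Uk ω j + Real.log (A j.1 k / mk))) ∂P)
    (f : ({j // j ∈ sig A k} → ℝ) → ℝ)
    (hf : Measure.map Uk P = volume.withDensity (fun t => ENNReal.ofReal (f t))) :
    Measure.map Tk P = volume.withDensity (fun t => ENNReal.ofReal
      (((∑ j : {j // j ∈ sig A k}, A j.1 k) /
          ∫ ω, (⨆ j : {j // j ∈ sig A k}, A j.1 k * Real.exp (Uk ω j)) ∂P) *
        (Real.exp (⨆ j, t j) / ∑ j : {j // j ∈ sig A k}, Real.exp (t j)) *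
        ∑ j : {j // j ∈ sig A k},
          (A j.1 k / ∑ i : {j // j ∈ sig A k}, A i.1 k) *
            ((mk / A j.1 k) * Real.exp (t j) *
              f (fun i => t i - Real.log (A i.1 k / mk))))) := by
  haveI hne := sig_nonempty hA k
  set L : ℝ := ∫ ω, (⨆ j : {j // j ∈ sig A k}, A j.1 k * Real.exp (Uk ω j)) ∂P with hLdef
  have hLpos : 0 < L := L_pos hA hUkmeas hUknorm
  -- Step A : algebraic simplification of the density
  have hALG : ∀ t : {j // j ∈ sig A k} → ℝ,
      (((∑ j : {j // j ∈ sig A k}, A j.1 k) / L) *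
        (Real.exp (⨆ j, t j) / ∑ j : {j // j ∈ sig A k}, Real.exp (t j)) *
        ∑ j : {j // j ∈ sig A k},
          (A j.1 k / ∑ i : {j // j ∈ sig A k}, A i.1 k) *
            ((mk / A j.1 k) * Real.exp (t j) *
              f (fun i => t i - Real.log (A i.1 k / mk))))
      = (mk / L) * Real.exp (⨆ j, t j) * f (fun i => t i - Real.log (A i.1 k / mk)) := by
    intro t
    generalize f (fun i => t i - Real.log (A i.1 k / mk)) = F
    have hSA : (0:ℝ) < ∑ j : {j // j ∈ sig A k}, A j.1 k :=
      Finset.sum_pos (fun j _ => sig_pos j.2) Finset.univ_nonempty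
    have hEt : (0:ℝ) < ∑ j : {j // j ∈ sig A k}, Real.exp (t j) :=
      Finset.sum_pos (fun j _ => Real.exp_pos _) Finset.univ_nonempty
    have hSA' : (∑ j : {j // j ∈ sig A k}, A j.1 k) ≠ 0 := hSA.ne'
    have hEt' : (∑ j : {j // j ∈ sig A k}, Real.exp (t j)) ≠ 0 := hEt.ne'
    have hL' : L ≠ 0 := hLpos.ne'
    have hsum : ∑ j : {j // j ∈ sig A k},
        (A j.1 k / ∑ i : {j // j ∈ sig A k}, A i.1 k) *
          ((mk / A j.1 k) * Real.exp (t j) * F)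
        = ((mk / ∑ i : {j // j ∈ sig A k}, A i.1 k) * F) *
            ∑ j : {j // j ∈ sig A k}, Real.exp (t j) := by
      rw [Finset.mul_sum]
      refine Finset.sum_congr rfl fun j _ => ?_
      have hAj : A j.1 k ≠ 0 := (sig_pos j.2).ne'
      have h1 : A j.1 k / (∑ i : {j // j ∈ sig A k}, A i.1 k) *
          ((mk / A j.1 k) * Real.exp (t j) * F)
          = (A j.1 k * (A j.1 k)⁻¹) *
            ((mk / ∑ i : {j // j ∈ sig A k}, A i.1 k) * F * Real.exp (t j)) := by
        ring
      rw [h1, mul_inv_cancel₀ hAj, one_mul]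
    rw [hsum]
    have h2 : (∑ j : {j // j ∈ sig A k}, A j.1 k) / L *
        (Real.exp (⨆ j, t j) / ∑ j : {j // j ∈ sig A k}, Real.exp (t j)) *
        (((mk / ∑ i : {j // j ∈ sig A k}, A i.1 k) * F) *
          ∑ j : {j // j ∈ sig A k}, Real.exp (t j))
        = ((∑ j : {j // j ∈ sig A k}, A j.1 k) * (∑ j : {j // j ∈ sig A k}, A j.1 k)⁻¹) *
          (((∑ j : {j // j ∈ sig A k}, Real.exp (t j)) *
            (∑ j : {j // j ∈ sig A k}, Real.exp (t j))⁻¹) *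
            ((mk / L) * Real.exp (⨆ j, t j) * F)) := by
      ring
    rw [h2, mul_inv_cancel₀ hSA', mul_inv_cancel₀ hEt', one_mul, one_mul]
  have hdens : (fun t : {j // j ∈ sig A k} → ℝ => ENNReal.ofReal
      (((∑ j : {j // j ∈ sig A k}, A j.1 k) / L) *
        (Real.exp (⨆ j, t j) / ∑ j : {j // j ∈ sig A k}, Real.exp (t j)) *
        ∑ j : {j // j ∈ sig A k},
          (A j.1 k / ∑ i : {j // j ∈ sig A k}, A i.1 k) *
            ((mk / A j.1 k) * Real.exp (t j) *
              f (fun i => t i - Real.log (A i.1 k / mk)))))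
      = fun t => ENNReal.ofReal ((mk / L) * Real.exp (⨆ j, t j))
          * ENNReal.ofReal (f (fun i => t i - Real.log (A i.1 k / mk))) := by
    funext t
    rw [hALG t, ENNReal.ofReal_mul (mul_nonneg (div_nonneg hmk.le hLpos.le) (Real.exp_pos _).le)]
  rw [hdens]
  set Ψ : ({j // j ∈ sig A k} → ℝ) → ℝ≥0∞ :=
    fun t => ENNReal.ofReal ((mk / L) * Real.exp (⨆ j, t j)) with hΨdef
  have hΨmeas : Measurable Ψ := by
    refine ENNReal.measurable_ofReal.comp (measurable_const.mul ?_)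
    exact Real.measurable_exp.comp (measurable_ciSup fun j => measurable_pi_apply j)
  set c : {j // j ∈ sig A k} → ℝ := fun j => Real.log (A j.1 k / mk) with hcdef
  set e : ({j // j ∈ sig A k} → ℝ) ≃ᵐ ({j // j ∈ sig A k} → ℝ) :=
    { toEquiv := Equiv.addRight c
      measurable_toFun := measurable_id.add_const c
      measurable_invFun :=
        measurable_id.add_const (-c) } with hedef
  have hvol : Measure.map (⇑e) volume = volume := by
    have h1 : ⇑e = fun x => x + c := rfl
    rw [h1]
    exact map_add_right_eq_self volume c
  refine Measure.ext fun C hC => ?_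
  have hG : Measurable fun u : {j // j ∈ sig A k} → ℝ => C.indicator Ψ (u + c) :=
    (hΨmeas.indicator hC).comp
      (measurable_id.add_const c)
  have hGfin : ∀ u : {j // j ∈ sig A k} → ℝ, C.indicator Ψ (u + c) ≠ ∞ := by
    intro u
    by_cases hu : (u + c) ∈ C
    · rw [Set.indicator_of_mem hu]; exact ENNReal.ofReal_ne_top
    · rw [Set.indicator_of_notMem hu]; exact ENNReal.zero_ne_top
  set N : ℝ := ∫ ω, (if (fun j : {j // j ∈ sig A k} => Uk ω j + Real.log (A j.1 k / mk)) ∈ C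
      then Real.exp (⨆ j : {j // j ∈ sig A k}, (Uk ω j + Real.log (A j.1 k / mk)))
      else 0) ∂P with hNdef
  have hRHS : (volume.withDensity fun t => Ψ t
        * ENNReal.ofReal (f (fun i => t i - Real.log (A i.1 k / mk)))) C
      = ENNReal.ofReal ((mk / L) * N) := by
    rw [withDensity_apply _ hC]
    calc ∫⁻ t in C, Ψ t * ENNReal.ofReal (f (fun i => t i - Real.log (A i.1 k / mk))) ∂volume
        = ∫⁻ t, C.indicator (fun t => Ψ t
            * ENNReal.ofReal (f (fun i => t i - Real.log (A i.1 k / mk)))) t ∂volume := by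
          rw [lintegral_indicator hC]
      _ = ∫⁻ t, C.indicator Ψ t
            * ENNReal.ofReal (f (fun i => t i - Real.log (A i.1 k / mk))) ∂volume := by
          refine lintegral_congr fun t => ?_
          by_cases ht : t ∈ C
          · rw [Set.indicator_of_mem ht, Set.indicator_of_mem ht]
          · rw [Set.indicator_of_notMem ht, Set.indicator_of_notMem ht, zero_mul]
      _ = ∫⁻ u, C.indicator Ψ (e u)
            * ENNReal.ofReal (f (fun i => (e u) i - Real.log (A i.1 k / mk))) ∂volume := by
          conv_lhs => rw [← hvol]
          rw [lintegral_map_equiv]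
      _ = ∫⁻ u, C.indicator Ψ (u + c) * ENNReal.ofReal (f u) ∂volume := by
          refine lintegral_congr fun u => ?_
          have h1 : e u = u + c := rfl
          have h2 : (fun i => (u + c) i - Real.log (A i.1 k / mk)) = u := by
            funext i
            simp [hcdef]
          rw [h1, h2]
      _ = ∫⁻ u, C.indicator Ψ (u + c)
            ∂(volume.withDensity fun t => ENNReal.ofReal (f t)) := by
          rw [lintegral_withDensity_arb _ hG hGfin]
      _ = ∫⁻ u, C.indicator Ψ (u + c) ∂(Measure.map Uk P) := by rw [← hf]
      _ = ∫⁻ ω, C.indicator Ψ (Uk ω + c) ∂P := lintegral_map hG hUkmeas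
      _ = ∫⁻ ω, ENNReal.ofReal ((mk / L) *
            (if (fun j : {j // j ∈ sig A k} => Uk ω j + Real.log (A j.1 k / mk)) ∈ C
              then Real.exp (⨆ j : {j // j ∈ sig A k}, (Uk ω j + Real.log (A j.1 k / mk)))
              else 0)) ∂P := by
          refine lintegral_congr fun ω => ?_
          have h1 : Uk ω + c = fun j : {j // j ∈ sig A k} =>
              Uk ω j + Real.log (A j.1 k / mk) := by
            funext j; simp [hcdef]
          rw [h1]
          by_cases hω : (fun j : {j // j ∈ sig A k} => Uk ω j + Real.log (A j.1 k / mk)) ∈ C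
          · rw [if_pos hω, Set.indicator_of_mem hω, hΨdef]
          · rw [if_neg hω, Set.indicator_of_notMem hω, mul_zero, ENNReal.ofReal_zero]
      _ = ENNReal.ofReal ((mk / L) * N) := by
          rw [← ofReal_integral_eq_lintegral_ofReal
            (((integrable_indicator_V hA hUkmeas hUknorm hmk hC)).const_mul _)
            (ae_of_all _ fun ω => mul_nonneg (div_nonneg hmk.le hLpos.le)
              (indicator_V_nonneg hA mk C ω)), hNdef, integral_const_mul]
  rw [hRHS, Measure.map_apply hTkmeas hC]
  have hset : Tk ⁻¹' C = {ω | Tk ω ∈ C} := rfl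
  rw [hset, ← ENNReal.ofReal_toReal (measure_ne_top P _), hTklaw C hC, integral_exp_sup_V hA hmk,
    ← hLdef, ← hNdef]
  congr 1
  have hmk' : mk ≠ 0 := hmk.ne'
  have hL' : L ≠ 0 := hLpos.ne'
  field_simp

lemma mix_term_k {d r : ℕ} {A : Fin d → Fin r → ℝ} (hA : MixCoeff d r A) (k : Fin r)
    {Ω : Type*} [MeasurableSpace Ω] {P : Measure Ω} [IsProbabilityMeasure P]
    {Uk : Ω → ({j // j ∈ sig A k} → ℝ)} (hUkmeas : Measurable Uk)
    (hUknorm : ∀ j, ∫ ω, Real.exp (Uk ω j) ∂P = 1) {mk : ℝ} (hmk : 0 < mk)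
    (Tk : Ω → ({j // j ∈ sig A k} → ℝ))
    (hTklaw : ∀ C : Set ({j // j ∈ sig A k} → ℝ), MeasurableSet C →
      (P {ω | Tk ω ∈ C}).toReal =
        (∫ ω, (if (fun j : {j // j ∈ sig A k} => Uk ω j + Real.log (A j.1 k / mk)) ∈ C
            then Real.exp (⨆ j : {j // j ∈ sig A k}, (Uk ω j + Real.log (A j.1 k / mk)))
            else 0) ∂P) /
          ∫ ω, Real.exp (⨆ j : {j // j ∈ sig A k},
            (Uk ω j + Real.log (A j.1 k / mk))) ∂P)
    {B : Set (Fin d → EReal)} (hB : MeasurableSet B) :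
    mk * ∫ ω, (if embA A k (fun j : {j // j ∈ sig A k} =>
          Uk ω j + Real.log (A j.1 k / mk)) ∈ B
        then Real.exp (⨆ j : {j // j ∈ sig A k}, (Uk ω j + Real.log (A j.1 k / mk)))
        else 0) ∂P
      = (∫ ω, (⨆ j : {j // j ∈ sig A k}, A j.1 k * Real.exp (Uk ω j)) ∂P) *
          (P {ω | embA A k (Tk ω) ∈ B}).toReal := by
  haveI hne := sig_nonempty hA k
  set L : ℝ := ∫ ω, (⨆ j : {j // j ∈ sig A k}, A j.1 k * Real.exp (Uk ω j)) ∂P with hLdef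
  have hLpos : 0 < L := L_pos hA hUkmeas hUknorm
  have hD : ∫ ω, Real.exp (⨆ j : {j // j ∈ sig A k},
      (Uk ω j + Real.log (A j.1 k / mk))) ∂P = mk⁻¹ * L := integral_exp_sup_V hA hmk
  have hDpos : 0 < mk⁻¹ * L := mul_pos (inv_pos.mpr hmk) hLpos
  have h1 := hTklaw (embA A k ⁻¹' B) ((measurable_embA A k) hB)
  rw [hD] at h1
  rw [eq_comm, div_eq_iff hDpos.ne'] at h1
  have hCB : (fun ω => (if embA A k (fun j : {j // j ∈ sig A k} =>
        Uk ω j + Real.log (A j.1 k / mk)) ∈ B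
      then Real.exp (⨆ j : {j // j ∈ sig A k}, (Uk ω j + Real.log (A j.1 k / mk)))
      else 0))
      = fun ω => (if (fun j : {j // j ∈ sig A k} => Uk ω j + Real.log (A j.1 k / mk))
          ∈ embA A k ⁻¹' B
        then Real.exp (⨆ j : {j // j ∈ sig A k}, (Uk ω j + Real.log (A j.1 k / mk)))
        else 0) := rfl
  have hset : {ω | Tk ω ∈ embA A k ⁻¹' B} = {ω | embA A k (Tk ω) ∈ B} := rfl
  rw [hCB, h1, hset]
  have h2 : mk * ((P {ω | embA A k (Tk ω) ∈ B}).toReal * (mk⁻¹ * L))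
      = (mk * mk⁻¹) * (L * (P {ω | embA A k (Tk ω) ∈ B}).toReal) := by ring
  rw [h2, mul_inv_cancel₀ hmk.ne', one_mul]

/-- Proposition 5.1: the `T`-generator associated with a mixture generator
is the mixture, with weights `w_k = ℓ^{(k)}((a_{jk})_j)/ℓ(1)`, of the tilted vectors
`T^{(k)}`, and each `T^{(k)}` has the stated Lebesgue density. -/
theorem mixture_T_generator_decomposition {d r : ℕ} [NeZero d] [NeZero r]
    (A : Fin d → Fin r → ℝ) (hA : MixCoeff d r A)
    {Ω : Type*} [MeasurableSpace Ω] (P : Measure Ω) [IsProbabilityMeasure P]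
    (Uk : (k : Fin r) → Ω → ({j // j ∈ sig A k} → ℝ))
    (hUkmeas : ∀ k, Measurable (Uk k))
    (hUknorm : ∀ k (j : {j // j ∈ sig A k}), ∫ ω, Real.exp (Uk k ω j) ∂P = 1)
    (m : Fin r → ℝ) (hm : ∀ k, m k ∈ Set.Ioo (0 : ℝ) 1) (hmsum : ∑ k, m k = 1)
    -- the mixture generator U
    {Ω' : Type*} [MeasurableSpace Ω'] (P' : Measure Ω') [IsProbabilityMeasure P']
    (U : Ω' → Fin d → EReal) (hUmeas : Measurable U)
    (hUlaw : Measure.map U P' =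
      ∑ k, (ENNReal.ofReal (m k)) •
        Measure.map (fun ω => embA A k (fun j => Uk k ω j + Real.log (A j.1 k / m k))) P)
    -- the associated T-generator
    (T : Ω' → Fin d → EReal) (hTmeas : Measurable T)
    (hTtop : ∀ ω' j, T ω' j ≠ ⊤)
    (hTU : ∀ B : Set (Fin d → EReal), MeasurableSet B →
      (P' {ω' | T ω' ∈ B}).toReal =
        (∫ ω', (if U ω' ∈ B then eexp (⨆ j, U ω' j) else 0) ∂P') /
          ∫ ω', eexp (⨆ j, U ω' j) ∂P')
    -- the tilted vectors T^{(k)} with P[T^{(k)} ∈ C] = E[e^{max P^{(k)}} 1{P^{(k)} ∈ C}]/E[e^{max P^{(k)}}]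
    (Tk : (k : Fin r) → Ω → ({j // j ∈ sig A k} → ℝ))
    (hTkmeas : ∀ k, Measurable (Tk k))
    (hTklaw : ∀ k (C : Set ({j // j ∈ sig A k} → ℝ)), MeasurableSet C →
      (P {ω | Tk k ω ∈ C}).toReal =
        (∫ ω, (if (fun j : {j // j ∈ sig A k} => Uk k ω j + Real.log (A j.1 k / m k)) ∈ C
            then Real.exp (⨆ j : {j // j ∈ sig A k}, (Uk k ω j + Real.log (A j.1 k / m k)))
            else 0) ∂P) /
          ∫ ω, Real.exp (⨆ j : {j // j ∈ sig A k},
            (Uk k ω j + Real.log (A j.1 k / m k))) ∂P) :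
    -- (1) the mixture decomposition of the law of T
    (∀ B : Set (Fin d → EReal), MeasurableSet B →
      (P' {ω' | T ω' ∈ B}).toReal =
        ∑ k, ((∫ ω, (⨆ j : {j // j ∈ sig A k}, A j.1 k * Real.exp (Uk k ω j)) ∂P) /
            (∑ k', ∫ ω, (⨆ j : {j // j ∈ sig A k'}, A j.1 k' * Real.exp (Uk k' ω j)) ∂P)) *
          (P {ω | embA A k (Tk k ω) ∈ B}).toReal) ∧
    -- (2) the Lebesgue density of T^{(k)}
    ∀ k (f : ({j // j ∈ sig A k} → ℝ) → ℝ),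
      Measure.map (Uk k) P = volume.withDensity (fun t => ENNReal.ofReal (f t)) →
      Measure.map (Tk k) P = volume.withDensity (fun t => ENNReal.ofReal
        (((∑ j : {j // j ∈ sig A k}, A j.1 k) /
            ∫ ω, (⨆ j : {j // j ∈ sig A k}, A j.1 k * Real.exp (Uk k ω j)) ∂P) *
          (Real.exp (⨆ j, t j) / ∑ j : {j // j ∈ sig A k}, Real.exp (t j)) *
          ∑ j : {j // j ∈ sig A k},
            (A j.1 k / ∑ i : {j // j ∈ sig A k}, A i.1 k) *
              ((m k / A j.1 k) * Real.exp (t j) *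
                f (fun i => t i - Real.log (A i.1 k / m k))))) := by
  have hne : ∀ k, Nonempty {j // j ∈ sig A k} := fun k => sig_nonempty hA k
  constructor
  · -- Part (1)
    -- the numerator identity
    have hNum : ∀ B' : Set (Fin d → EReal), MeasurableSet B' →
        (∫ ω', (if U ω' ∈ B' then eexp (⨆ j, U ω' j) else 0) ∂P')
          = ∑ k, m k * ∫ ω, (if embA A k (fun j : {j // j ∈ sig A k} =>
                Uk k ω j + Real.log (A j.1 k / m k)) ∈ B'
              then Real.exp (⨆ j : {j // j ∈ sig A k}, (Uk k ω j + Real.log (A j.1 k / m k)))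
              else 0) ∂P := by
      intro B' hB'
      set Θ : (Fin d → EReal) → ℝ := fun x => if x ∈ B' then eexp (⨆ j, x j) else 0 with hΘdef
      have hΘmeas : Measurable Θ :=
        Measurable.ite hB'
          (measurable_eexp.comp (Measurable.iSup fun j => measurable_pi_apply j))
          measurable_const
      have hWmeas : ∀ k, Measurable fun ω =>
          embA A k (fun j : {j // j ∈ sig A k} => Uk k ω j + Real.log (A j.1 k / m k)) :=
        fun k => (measurable_embA A k).comp (measurable_V (hUkmeas k) (m k))
      have hcomp : ∀ k (ω : Ω), Θ (embA A k (fun j : {j // j ∈ sig A k} =>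
            Uk k ω j + Real.log (A j.1 k / m k)))
          = (if embA A k (fun j : {j // j ∈ sig A k} =>
                Uk k ω j + Real.log (A j.1 k / m k)) ∈ B'
              then Real.exp (⨆ j : {j // j ∈ sig A k}, (Uk k ω j + Real.log (A j.1 k / m k)))
              else 0) := by
        intro k ω
        rw [hΘdef]
        dsimp only
        rw [eexp_iSup_embA (hne k)]
      have hint : ∀ k, Integrable (fun ω => Θ (embA A k (fun j : {j // j ∈ sig A k} =>
          Uk k ω j + Real.log (A j.1 k / m k)))) P := by
        intro k
        have heq : (fun ω => Θ (embA A k (fun j : {j // j ∈ sig A k} =>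
            Uk k ω j + Real.log (A j.1 k / m k))))
            = fun ω => (if embA A k (fun j : {j // j ∈ sig A k} =>
                  Uk k ω j + Real.log (A j.1 k / m k)) ∈ B'
                then Real.exp (⨆ j : {j // j ∈ sig A k},
                  (Uk k ω j + Real.log (A j.1 k / m k)))
                else 0) := funext (hcomp k)
        rw [heq]
        refine Integrable.mono' (integrable_exp_sup_V hA (hUkmeas k) (hUknorm k) (hm k).1)
          ((Measurable.ite ((hWmeas k) hB')
            (measurable_exp_sup_V hA (hUkmeas k) (m k)) measurable_const).aestronglyMeasurable)
          (ae_of_all _ fun ω => ?_)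
        rw [Real.norm_eq_abs]
        split
        · rw [abs_of_nonneg (Real.exp_pos _).le]
        · rw [abs_of_nonneg le_rfl]
          exact (Real.exp_pos _).le
      have hintm : ∀ k ∈ Finset.univ, Integrable Θ ((ENNReal.ofReal (m k)) •
          Measure.map (fun ω => embA A k (fun j : {j // j ∈ sig A k} =>
            Uk k ω j + Real.log (A j.1 k / m k))) P) := by
        intro k _
        refine Integrable.smul_measure ?_ ENNReal.ofReal_ne_top
        exact (integrable_map_measure hΘmeas.aestronglyMeasurable
          (hWmeas k).aemeasurable).mpr (hint k)
      calc ∫ ω', (if U ω' ∈ B' then eexp (⨆ j, U ω' j) else 0) ∂P'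
          = ∫ x, Θ x ∂(Measure.map U P') :=
            (integral_map hUmeas.aemeasurable hΘmeas.aestronglyMeasurable).symm
        _ = ∑ k, ∫ x, Θ x ∂((ENNReal.ofReal (m k)) •
              Measure.map (fun ω => embA A k (fun j : {j // j ∈ sig A k} =>
                Uk k ω j + Real.log (A j.1 k / m k))) P) := by
            rw [hUlaw]
            exact integral_finset_sum_measure hintm
        _ = ∑ k, m k * ∫ ω, (if embA A k (fun j : {j // j ∈ sig A k} =>
                Uk k ω j + Real.log (A j.1 k / m k)) ∈ B'
              then Real.exp (⨆ j : {j // j ∈ sig A k}, (Uk k ω j + Real.log (A j.1 k / m k)))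
              else 0) ∂P := by
            refine Finset.sum_congr rfl fun k _ => ?_
            rw [integral_smul_measure, ENNReal.toReal_ofReal (hm k).1.le, smul_eq_mul,
              integral_map (hWmeas k).aemeasurable hΘmeas.aestronglyMeasurable]
            congr 1
            exact integral_congr_ae (ae_of_all _ (hcomp k))
    -- the denominator identity
    have hDen : (∫ ω', eexp (⨆ j, U ω' j) ∂P')
        = ∑ k, ∫ ω, (⨆ j : {j // j ∈ sig A k}, A j.1 k * Real.exp (Uk k ω j)) ∂P := by
      have h1 := hNum Set.univ MeasurableSet.univ
      simp only [Set.mem_univ, if_true] at h1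
      rw [h1]
      refine Finset.sum_congr rfl fun k _ => ?_
      rw [integral_exp_sup_V hA (hm k).1]
      have h4 : m k * ((m k)⁻¹ * ∫ ω, (⨆ j : {j // j ∈ sig A k},
          A j.1 k * Real.exp (Uk k ω j)) ∂P)
          = (m k * (m k)⁻¹) * ∫ ω, (⨆ j : {j // j ∈ sig A k},
              A j.1 k * Real.exp (Uk k ω j)) ∂P := by ring
      rw [h4, mul_inv_cancel₀ (hm k).1.ne', one_mul]
    intro B hB
    rw [hTU B hB, hNum B hB, hDen]
    have hterm : ∀ k ∈ Finset.univ, m k * ∫ ω, (if embA A k (fun j : {j // j ∈ sig A k} =>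
          Uk k ω j + Real.log (A j.1 k / m k)) ∈ B
        then Real.exp (⨆ j : {j // j ∈ sig A k}, (Uk k ω j + Real.log (A j.1 k / m k)))
        else 0) ∂P
        = (∫ ω, (⨆ j : {j // j ∈ sig A k}, A j.1 k * Real.exp (Uk k ω j)) ∂P) *
            (P {ω | embA A k (Tk k ω) ∈ B}).toReal :=
      fun k _ => mix_term_k hA k (hUkmeas k) (hUknorm k) (hm k).1 (Tk k) (hTklaw k) hB
    rw [Finset.sum_congr rfl hterm, Finset.sum_div]
    exact Finset.sum_congr rfl fun k _ => mul_div_right_comm _ _ _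
  · -- Part (2)
    intro k f hf
    exact density_k hA k (hUkmeas k) (hUknorm k) (hm k).1 (Tk k) (hTkmeas k) (hTklaw k) f hf
end
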